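/- arXiv:1710.07528 — 8 statements merged into one kernel-verified Lean document; each statement's English description precedes it below -/
import Mathlib

section
/- A simple finite graph is a transitive forest if and only if it contains neither C4 (the cycle on four vertices) nor P4 (the path on four vertices) as an induced subgraph. -/
/-- A simple graph is a *transitive forest* if it is the comparability graph of
a rooted forest, i.e. there is a partial order on the vertices whose
comparability relation is the adjacency relation and in which the set of
elements above any element is a chain (a forest order). -/
def IsTransitiveForest {V : Type} (G : SimpleGraph V) : Prop :=
  ∃ r : PartialOrder V,
    (∀ x y : V, G.Adj x y ↔ x ≠ y ∧ (r.le x y ∨ r.le y x)) ∧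
    (∀ x y z : V, r.le x y → r.le x z → (r.le y z ∨ r.le z y))

/-- `G` contains the cycle `C4` on four vertices as an induced subgraph. -/
def HasInducedC4 {V : Type} (G : SimpleGraph V) : Prop :=
  ∃ a b c d : V, a ≠ b ∧ a ≠ c ∧ a ≠ d ∧ b ≠ c ∧ b ≠ d ∧ c ≠ d ∧
    G.Adj a b ∧ G.Adj b c ∧ G.Adj c d ∧ G.Adj d a ∧ ¬ G.Adj a c ∧ ¬ G.Adj b d

/-- `G` contains the path `P4` on four vertices as an induced subgraph. -/
def HasInducedP4 {V : Type} (G : SimpleGraph V) : Prop :=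
  ∃ a b c d : V, a ≠ b ∧ a ≠ c ∧ a ≠ d ∧ b ≠ c ∧ b ≠ d ∧ c ≠ d ∧
    G.Adj a b ∧ G.Adj b c ∧ G.Adj c d ∧ ¬ G.Adj a c ∧ ¬ G.Adj a d ∧ ¬ G.Adj b d

namespace WolkAux

/-- `Nle G x y` : every neighbor of `x` is a neighbor of `y` or equals `y`. -/
def Nle {V : Type} (G : SimpleGraph V) (x y : V) : Prop :=
  ∀ z, G.Adj x z → G.Adj y z ∨ z = y

lemma nle_total {V : Type} {G : SimpleGraph V}
    (hC4 : ¬ HasInducedC4 G) (hP4 : ¬ HasInducedP4 G)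
    {x y : V} (h : G.Adj x y) : Nle G x y ∨ Nle G y x := by
  by_contra hc
  push_neg at hc
  obtain ⟨h1, h2⟩ := hc
  unfold Nle at h1 h2
  push_neg at h1 h2
  obtain ⟨u, hxu, hyu, huy⟩ := h1
  obtain ⟨v, hyv, hxv, hvx⟩ := h2
  have hux : u ≠ x := hxu.ne'
  have huv : u ≠ v := fun e => hxv (e ▸ hxu)
  have hxy : x ≠ y := h.ne
  have hxv' : x ≠ v := hvx.symm
  have hyv' : y ≠ v := hyv.ne
  have hnuy : ¬ G.Adj u y := fun h' => hyu h'.symm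
  by_cases huvAdj : G.Adj u v
  · exact hC4 ⟨u, x, y, v, hux, huy, huv, hxy, hxv', hyv',
      hxu.symm, h, hyv, huvAdj.symm, hnuy, hxv⟩
  · exact hP4 ⟨u, x, y, v, hux, huy, huv, hxy, hxv', hyv',
      hxu.symm, h, hyv, hnuy, huvAdj, hxv⟩

lemma nle_trans {V : Type} {G : SimpleGraph V} {x y z : V}
    (hxy : G.Adj x y) (hyz : G.Adj y z)
    (h1 : Nle G x y) (h2 : Nle G y z) : Nle G x z := by
  intro w hw
  rcases h1 w hw with h | rfl
  · exact h2 w h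
  · exact Or.inl hyz.symm

end WolkAux

/-- **Wolk.** A simple finite graph is a transitive forest if and
only if it contains neither `C4` nor `P4` as an induced subgraph. -/
theorem transitiveForest_iff_no_induced_C4_P4
    {V : Type} [Fintype V] (G : SimpleGraph V) :
    IsTransitiveForest G ↔ ¬ HasInducedC4 G ∧ ¬ HasInducedP4 G := by
  classical
  constructor
  · rintro ⟨r, hadj, hchain⟩
    have comp : ∀ {x y : V}, G.Adj x y → (r.le x y ∨ r.le y x) :=
      fun h => ((hadj _ _).mp h).2
    have mkadj : ∀ {x y : V}, x ≠ y → r.le x y → G.Adj x y :=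
      fun hne hle => (hadj _ _).mpr ⟨hne, Or.inl hle⟩
    constructor
    · rintro ⟨a, b, c, d, hab', hac', had', hbc', hbd', hcd',
        hab, hbc, hcd, hda, hnac, hnbd⟩
      rcases comp hab with h1 | h1
      · rcases comp hbc with h2 | h2
        · exact hnac (mkadj hac' (r.le_trans _ _ _ h1 h2))
        · rcases comp hcd with h3 | h3
          · rcases hchain c b d h2 h3 with h4 | h4
            · exact hnbd (mkadj hbd' h4)
            · exact hnbd ((mkadj hbd'.symm h4).symm)
          · exact hnbd ((mkadj hbd'.symm (r.le_trans _ _ _ h3 h2)).symm)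
      · rcases comp hda with h2 | h2
        · rcases comp hcd with h3 | h3
          · rcases comp hbc with h4 | h4
            · exact hnbd (mkadj hbd' (r.le_trans _ _ _ h4 h3))
            · rcases hchain c b d h4 h3 with h5 | h5
              · exact hnbd (mkadj hbd' h5)
              · exact hnbd ((mkadj hbd'.symm h5).symm)
          · rcases hchain d c a h3 h2 with h5 | h5
            · exact hnac ((mkadj hac'.symm h5).symm)
            · exact hnac (mkadj hac' h5)
        · exact hnbd (mkadj hbd' (r.le_trans _ _ _ h1 h2))
    · rintro ⟨a, b, c, d, hab', hac', had', hbc', hbd', hcd',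
        hab, hbc, hcd, hnac, hnad, hnbd⟩
      rcases comp hab with h1 | h1
      · rcases comp hbc with h2 | h2
        · exact hnac (mkadj hac' (r.le_trans _ _ _ h1 h2))
        · rcases comp hcd with h3 | h3
          · rcases hchain c b d h2 h3 with h4 | h4
            · exact hnbd (mkadj hbd' h4)
            · exact hnbd ((mkadj hbd'.symm h4).symm)
          · exact hnbd ((mkadj hbd'.symm (r.le_trans _ _ _ h3 h2)).symm)
      · rcases comp hbc with h2 | h2
        · rcases hchain b a c h1 h2 with h3 | h3
          · exact hnac (mkadj hac' h3)
          · exact hnac ((mkadj hac'.symm h3).symm)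
        · exact hnac ((mkadj hac'.symm (r.le_trans _ _ _ h2 h1)).symm)
  · rintro ⟨hC4, hP4⟩
    set e : V ≃ Fin (Fintype.card V) := Fintype.equivFin V with he
    set lt : V → V → Prop := fun x y =>
      G.Adj x y ∧ WolkAux.Nle G x y ∧ (WolkAux.Nle G y x → e x < e y) with hlt
    have lt_asymm : ∀ {x y : V}, lt x y → lt y x → False := by
      rintro x y ⟨_, h1, h1'⟩ ⟨_, h2, h2'⟩
      exact absurd (h1' h2) (not_lt_of_gt (h2' h1))
    have lt_trans : ∀ {x y z : V}, lt x y → lt y z → lt x z := by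
      rintro x y z ⟨hxy, h1, h1'⟩ ⟨hyz, h2, h2'⟩
      have hxz : x ≠ z := by
        rintro rfl
        exact lt_asymm ⟨hxy, h1, h1'⟩ ⟨hyz, h2, h2'⟩
      have hadjxz : G.Adj x z := by
        rcases h2 x hxy.symm with h | h
        · exact h.symm
        · exact absurd h hxz
      refine ⟨hadjxz, WolkAux.nle_trans hxy hyz h1 h2, fun hzx => ?_⟩
      have hzy : WolkAux.Nle G z y := WolkAux.nle_trans hadjxz.symm hxy hzx h1
      have hyx : WolkAux.Nle G y x := WolkAux.nle_trans hyz hadjxz.symm h2 hzx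
      exact (h1' hyx).trans (h2' hzy)
    -- from an edge, one of the two strict relations holds
    have edge_lt : ∀ {x y : V}, G.Adj x y → lt x y ∨ lt y x := by
      intro x y h
      rcases WolkAux.nle_total hC4 hP4 h with h1 | h1
      · by_cases h2 : WolkAux.Nle G y x
        · have hne : e x ≠ e y := fun hxy => h.ne (e.injective hxy)
          rcases hne.lt_or_gt with h3 | h3
          · exact Or.inl ⟨h, h1, fun _ => h3⟩
          · exact Or.inr ⟨h.symm, h2, fun _ => h3⟩
        · exact Or.inl ⟨h, h1, fun h3 => absurd h3 h2⟩
      · by_cases h2 : WolkAux.Nle G x y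
        · have hne : e x ≠ e y := fun hxy => h.ne (e.injective hxy)
          rcases hne.lt_or_gt with h3 | h3
          · exact Or.inl ⟨h, h2, fun _ => h3⟩
          · exact Or.inr ⟨h.symm, h1, fun _ => h3⟩
        · exact Or.inr ⟨h.symm, h1, fun h3 => absurd h3 h2⟩
    refine ⟨{ le := fun x y => x = y ∨ lt x y
              le_refl := fun x => Or.inl rfl
              le_trans := ?_
              le_antisymm := ?_ }, ?_, ?_⟩
    · rintro x y z (rfl | h1) h2
      · exact h2
      · rcases h2 with rfl | h2
        · exact Or.inr h1
        · exact Or.inr (lt_trans h1 h2)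
    · rintro x y (rfl | h1) h2
      · rfl
      · rcases h2 with rfl | h2
        · rfl
        · exact absurd h2 (fun h2 => lt_asymm h1 h2)
    · intro x y
      constructor
      · intro h
        refine ⟨h.ne, ?_⟩
        rcases edge_lt h with h1 | h1
        · exact Or.inl (Or.inr h1)
        · exact Or.inr (Or.inr h1)
      · rintro ⟨hne, (rfl | h1) | (rfl | h1)⟩
        · exact absurd rfl hne
        · exact h1.1
        · exact absurd rfl hne
        · exact h1.1.symm
    · rintro x y z (rfl | h1) h2
      · exact Or.inl h2
      · rcases h2 with rfl | h2
        · exact Or.inr (Or.inr h1)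
        · by_cases hyz : y = z
          · exact Or.inl (Or.inl hyz)
          · have hadjyz : G.Adj y z := by
              rcases h1.2.1 z h2.1 with h | h
              · exact h
              · exact absurd h.symm hyz
            rcases edge_lt hadjyz with h3 | h3
            · exact Or.inl (Or.inr h3)
            · exact Or.inr (Or.inr h3)
end

section
/- If M ↪ M′ and N ↪ N′ (i.e., there exist monoid morphisms φ : M → M′ and ψ : N → N′ with φ⁻¹(1) = {1} and ψ⁻¹(1) = {1}), then M * N ↪ M′ * N′, i.e., there is a monoid morphism κ : M * N → M′ * N′ with κ⁻¹(1) = {1}. -/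
open Monoid

section CoprodIKey

variable {ι : Type*} {A B : ι → Type*} [∀ i, Monoid (A i)] [∀ i, Monoid (B i)]

lemma coprodI_key (f : ∀ i, A i →* B i) (hf : ∀ i a, f i a = 1 → a = 1)
    (x : CoprodI A) (hx : CoprodI.lift (fun i => (CoprodI.of (M := B)).comp (f i)) x = 1) :
    x = 1 := by
  classical
  by_contra hne
  set Φ : CoprodI A →* CoprodI B := CoprodI.lift (fun i => (CoprodI.of (M := B)).comp (f i))
  set w : CoprodI.Word A := CoprodI.Word.equiv x with hw
  have hprod : w.prod = x := CoprodI.Word.equiv.symm_apply_apply x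
  have hnil : w.toList ≠ [] := by
    intro h
    apply hne
    rw [← hprod]
    have : w = CoprodI.Word.empty := CoprodI.Word.ext h
    rw [this, CoprodI.Word.prod_empty]
  -- the mapped word
  refine hnil ?_
  set w' : CoprodI.Word B :=
    { toList := w.toList.map fun l => ⟨l.1, f l.1 l.2⟩
      ne_one := by
        intro l hl
        simp only [List.mem_map] at hl
        obtain ⟨l0, hl0, rfl⟩ := hl
        intro h1
        exact w.ne_one l0 hl0 (hf _ _ h1)
      chain_ne := by
        rw [List.isChain_map]
        exact w.chain_ne } with hw'
  have hΦ : Φ x = w'.prod := by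
    rw [← hprod, CoprodI.Word.prod, CoprodI.Word.prod, map_list_prod]
    simp only [hw', List.map_map, Function.comp_def, CoprodI.lift_of, MonoidHom.comp_apply, Φ]
  have : w' = CoprodI.Word.empty := by
    have hinj : Function.Injective (CoprodI.Word.prod (M := B)) :=
      (CoprodI.Word.equiv (M := B)).symm.injective
    apply hinj
    rw [← hΦ, hx, CoprodI.Word.prod_empty]
  have := congrArg CoprodI.Word.toList this
  simpa [hw'] using this

end CoprodIKey

section Bridge

variable (M N : Type u) [Monoid M] [Monoid N]

/-- The two-element family. -/
def Fam : Bool → Type u := fun b => bif b then M else N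

instance : ∀ b, Monoid (Fam M N b)
  | true => inferInstanceAs (Monoid M)
  | false => inferInstanceAs (Monoid N)

variable {M N}

/-- From the coprod to the indexed coprod. -/
def toI : Coprod M N →* CoprodI (Fam M N) :=
  Coprod.lift (CoprodI.of (M := Fam M N) (i := true)) (CoprodI.of (M := Fam M N) (i := false))

/-- Back. -/
def fromI : CoprodI (Fam M N) →* Coprod M N :=
  CoprodI.lift (fun b => match b with
    | true => Coprod.inl
    | false => Coprod.inr)

lemma fromI_toI (x : Coprod M N) : fromI (toI x) = x := by
  have : (fromI.comp (toI : Coprod M N →* _)) = MonoidHom.id _ := by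
    apply Coprod.hom_ext <;> ext m <;>
      simp only [MonoidHom.comp_apply, MonoidHom.id_apply, toI, fromI,
        Coprod.lift_apply_inl, Coprod.lift_apply_inr] <;> (erw [CoprodI.lift_of])
  exact DFunLike.congr_fun this x

variable {M' N' : Type v} [Monoid M'] [Monoid N']

/-- Family of maps. -/
def famHom (φ : M →* M') (ψ : N →* N') : ∀ b, Fam M N b →* Fam M' N' b
  | true => φ
  | false => ψ

lemma key_coprod (φ : M →* M') (ψ : N →* N')
    (hφ : ∀ a, φ a = 1 → a = 1) (hψ : ∀ a, ψ a = 1 → a = 1)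
    (x : Coprod M N) (hx : Coprod.map φ ψ x = 1) : x = 1 := by
  set Φ : CoprodI (Fam M N) →* CoprodI (Fam M' N') :=
    CoprodI.lift (fun b => (CoprodI.of (M := Fam M' N')).comp (famHom φ ψ b))
  have hnat : Φ.comp (toI : Coprod M N →* _) = (toI).comp (Coprod.map φ ψ) := by
    apply Coprod.hom_ext <;> ext m <;>
      simp only [MonoidHom.comp_apply, toI, famHom, Φ, Coprod.lift_apply_inl,
        Coprod.lift_apply_inr, Coprod.map_apply_inl, Coprod.map_apply_inr,
        MonoidHom.comp_apply] <;> (erw [CoprodI.lift_of])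
  have h1 : Φ (toI x) = 1 := by
    have := DFunLike.congr_fun hnat x
    simp only [MonoidHom.comp_apply] at this
    rw [this, hx, map_one]
  have h2 : toI x = 1 := by
    refine coprodI_key (famHom φ ψ) ?_ _ h1
    intro b
    cases b
    · exact hψ
    · exact hφ
  have := fromI_toI x
  rw [h2, map_one] at this
  exact this.symm

end Bridge

section Main

universe u v u' v'

lemma key_coprod' {M : Type u} {M' : Type u'} {N : Type v} {N' : Type v'}
    [Monoid M] [Monoid M'] [Monoid N] [Monoid N']
    (φ : M →* M') (ψ : N →* N')
    (hφ : ∀ a, φ a = 1 → a = 1) (hψ : ∀ a, ψ a = 1 → a = 1)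
    (x : Coprod M N) (hx : Coprod.map φ ψ x = 1) : x = 1 := by
  let uM : ULift.{v} M ≃* M := MulEquiv.ulift
  let uN : ULift.{u} N ≃* N := MulEquiv.ulift
  let uM' : ULift.{v'} M' ≃* M' := MulEquiv.ulift
  let uN' : ULift.{u'} N' ≃* N' := MulEquiv.ulift
  let φ₀ : ULift.{v} M →* ULift.{v'} M' :=
    uM'.symm.toMonoidHom.comp (φ.comp uM.toMonoidHom)
  let ψ₀ : ULift.{u} N →* ULift.{u'} N' :=
    uN'.symm.toMonoidHom.comp (ψ.comp uN.toMonoidHom)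
  have hφ₀ : ∀ a, φ₀ a = 1 → a = 1 := by
    intro a ha
    have h1 : φ (uM a) = 1 := by
      have := congrArg uM' ha
      simpa [φ₀] using this
    have h2 : uM a = 1 := hφ _ h1
    have := congrArg uM.symm h2
    simpa using this
  have hψ₀ : ∀ a, ψ₀ a = 1 → a = 1 := by
    intro a ha
    have h1 : ψ (uN a) = 1 := by
      have := congrArg uN' ha
      simpa [ψ₀] using this
    have h2 : uN a = 1 := hψ _ h1
    have := congrArg uN.symm h2
    simpa using this
  set y : Coprod (ULift.{v} M) (ULift.{u} N) :=
    Coprod.map uM.symm.toMonoidHom uN.symm.toMonoidHom x with hy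
  have hcompM : φ₀.comp uM.symm.toMonoidHom = uM'.symm.toMonoidHom.comp φ := by
    ext a; simp [φ₀, uM]
  have hcompN : ψ₀.comp uN.symm.toMonoidHom = uN'.symm.toMonoidHom.comp ψ := by
    ext a; simp [ψ₀, uN]
  have h1 : Coprod.map φ₀ ψ₀ y = 1 := by
    rw [hy, Coprod.map_map, hcompM, hcompN, ← Coprod.map_map, hx, map_one]
  have h2 : y = 1 := key_coprod φ₀ ψ₀ hφ₀ hψ₀ y h1
  have hMid : uM.toMonoidHom.comp uM.symm.toMonoidHom = MonoidHom.id M := by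
    ext a; simp
  have hNid : uN.toMonoidHom.comp uN.symm.toMonoidHom = MonoidHom.id N := by
    ext a; simp
  have h3 : Coprod.map uM.toMonoidHom uN.toMonoidHom y = x := by
    rw [hy, Coprod.map_map, hMid, hNid, Coprod.map_id_id, MonoidHom.id_apply]
  rw [h2, map_one] at h3
  exact h3.symm

end Main

/-- If `M ↪ M′` and `N ↪ N′` (there are monoid morphisms whose
preimage of `1` is exactly `{1}`), then `M ∗ N ↪ M′ ∗ N′`: there is a monoid
morphism `κ : M ∗ N →* M′ ∗ N′` with `κ⁻¹(1) = {1}`. -/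
theorem freeProduct_embedding
    {M M' N N' : Type*} [Monoid M] [Monoid M'] [Monoid N] [Monoid N']
    (φ : M →* M') (ψ : N →* N')
    (hφ : (φ : M → M') ⁻¹' {1} = {1}) (hψ : (ψ : N → N') ⁻¹' {1} = {1}) :
    ∃ κ : Coprod M N →* Coprod M' N',
      (κ : Coprod M N → Coprod M' N') ⁻¹' {1} = {1} := by
  have hφ' : ∀ a, φ a = 1 → a = 1 := by
    intro a ha
    have : a ∈ (φ : M → M') ⁻¹' {1} := ha
    rw [hφ] at this
    exact this
  have hψ' : ∀ a, ψ a = 1 → a = 1 := by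
    intro a ha
    have : a ∈ (ψ : N → N') ⁻¹' {1} := ha
    rw [hψ] at this
    exact this
  refine ⟨Coprod.map φ ψ, ?_⟩
  ext x
  simp only [Set.mem_preimage, Set.mem_singleton_iff]
  constructor
  · exact key_coprod' φ ψ hφ' hψ' x
  · rintro rfl; simp
end

section
/- Let M be a monoid such that R₁(M) ≠ {1}, where R₁(M) = {x ∈ M | ∃ y ∈ M, x·y = 1}. Then for every n ≥ 1 there is a monoid morphism φ : 𝔹^(n) * M → 𝔹 * M with φ⁻¹(1) = {1}, where 𝔹^(n) is the n-fold free product of the bicyclic monoid 𝔹 with itself. -/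
open FreeMonoid

/-- Defining relation of the `n`-fold free product `𝔹^(n)` of bicyclic monoids:
generators `a_i = (i, true)`, `ā_i = (i, false)` with relations `a_i ā_i = 1`. -/
def bicyclicRel (n : ℕ) :
    FreeMonoid (Fin n × Bool) → FreeMonoid (Fin n × Bool) → Prop := fun w₁ w₂ =>
  ∃ i : Fin n, w₁ = of (i, true) * of (i, false) ∧ w₂ = 1

/-- The `n`-fold free product `𝔹^(n)` of the bicyclic monoid with itself. -/
def BicyclicPow (n : ℕ) : Type := (conGen (bicyclicRel n)).Quotient

instance (n : ℕ) : Monoid (BicyclicPow n) :=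
  inferInstanceAs (Monoid (conGen (bicyclicRel n)).Quotient)

/-- The bicyclic monoid `𝔹 = ⟨a, ā | aā = 1⟩`. -/
abbrev Bicyclic : Type := BicyclicPow 1

/-! Choose `x ≠ 1` with `x * y = 1` and send `aᵢ ↦ a^(i+1) x a^(i+1)`, `āᵢ ↦ ā^(i+1) y ā^(i+1)`
and `m ↦ m`. The monoid `𝔹 ∗ M` acts on words `g₀ b₁ g₁ ⋯ bₖ gₖ` (letters `bⱼ ∈ {a, ā}`,
`gⱼ ∈ M`) by left multiplication, cancelling `a ā = 1` and multiplying in `M`. Such words can be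
decoded from left to right back into `𝔹^(n) ∗ M`, and decoding is equivariant: if `s` decodes to
`v`, then `φ(w) • s` decodes to `w * v`. Applied to the empty word, `φ(w) = 1` forces `w = 1`. -/

namespace BicyclicPow

variable {n : ℕ}

def gen : Fin n × Bool → BicyclicPow n := PresentedMonoid.of (bicyclicRel n)

theorem gen_true_mul_gen_false (i : Fin n) : gen (i, true) * gen (i, false) = 1 :=
  PresentedMonoid.mk_eq_mk_of_rel ⟨i, rfl, rfl⟩

theorem closure_range_gen : Submonoid.closure (Set.range (gen (n := n))) = ⊤ :=
  PresentedMonoid.closure_range_of _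

def lift {N : Type*} [Monoid N] (f : Fin n × Bool → N)
    (hf : ∀ i, f (i, true) * f (i, false) = 1) : BicyclicPow n →* N :=
  PresentedMonoid.lift f <| by
    rintro _ _ ⟨i, rfl, rfl⟩
    simpa using hf i

@[simp]
theorem lift_gen {N : Type*} [Monoid N] (f : Fin n × Bool → N)
    (hf : ∀ i, f (i, true) * f (i, false) = 1) (p : Fin n × Bool) : lift f hf (gen p) = f p :=
  rfl

end BicyclicPow

namespace Bicyclic

def a : Bicyclic := BicyclicPow.gen (0, true)

def abar : Bicyclic := BicyclicPow.gen (0, false)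

theorem a_mul_abar : a * abar = 1 := BicyclicPow.gen_true_mul_gen_false 0

end Bicyclic

namespace BicyclicCoprod

open Monoid.Coprod

/-- `(g₀, [(b₁, g₁), …, (bₖ, gₖ)])` encodes the word `g₀ b₁ g₁ ⋯ bₖ gₖ` of `𝔹 ∗ M`, where the
letter `bⱼ` is `a` if `bⱼ = true` and `ā` otherwise, and a slot `gⱼ = 1` stands for no letter. -/
abbrev Word (M : Type*) := M × List (Bool × M)

section Action

variable {M : Type*} [Monoid M]

def push (b : Bool) (s : Word M) : Word M := (1, (b, s.1) :: s.2)

theorem push_iterate_succ (b : Bool) (k : ℕ) (s : Word M) :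
    (push b)^[k + 1] s = (1, List.replicate k (b, 1) ++ (b, s.1) :: s.2) := by
  induction k with
  | zero => rfl
  | succ k ih => rw [Function.iterate_succ_apply', ih, List.replicate_succ]; rfl

def mulTop : M →* Function.End (Word M) where
  toFun g s := (g * s.1, s.2)
  map_one' := funext fun s => Prod.ext (one_mul s.1) rfl
  map_mul' g h := funext fun s => Prod.ext (mul_assoc g h s.1) rfl

@[simp]
theorem mulTop_apply (g : M) (s : Word M) : mulTop g s = (g * s.1, s.2) := rfl

variable [DecidableEq M]

def pushA : Word M → Word M
  | (g, (false, h) :: L) => if g = 1 then (h, L) else push true (g, (false, h) :: L)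
  | s => push true s

theorem pushA_push_false : Function.LeftInverse (pushA (M := M)) (push false) := fun _ => by
  simp [push, pushA]

theorem pushA_iterate_push_false_iterate_of_le {k m : ℕ} (h : k ≤ m) (s : Word M) :
    pushA^[k] ((push false)^[m] s) = (push false)^[m - k] s := by
  obtain ⟨r, rfl⟩ := Nat.exists_eq_add_of_le h
  rw [Function.iterate_add_apply, pushA_push_false.iterate, Nat.add_sub_cancel_left]

theorem pushA_iterate_push_false_iterate_of_ge {k m : ℕ} (h : m ≤ k) (s : Word M) :
    pushA^[k] ((push false)^[m] s) = pushA^[k - m] s := by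
  obtain ⟨r, rfl⟩ := Nat.exists_eq_add_of_le h
  rw [Nat.add_comm, Function.iterate_add_apply, pushA_push_false.iterate, Nat.add_sub_cancel]

theorem pushA_of_ne_one {s : Word M} (hs : s.1 ≠ 1) : pushA s = push true s := by
  obtain ⟨g, _ | ⟨⟨_ | _, h⟩, L⟩⟩ := s <;> simp_all [pushA]

theorem pushA_eq_push_true_or (s : Word M) :
    pushA s = push true s ∨ ∃ h L, s = (1, (false, h) :: L) := by
  obtain ⟨g, _ | ⟨⟨_ | _, h⟩, L⟩⟩ := s
  · exact .inl rfl
  · by_cases hg : g = 1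
    · exact .inr ⟨h, L, by rw [hg]⟩
    · exact .inl (if_neg hg)
  · exact .inl rfl

theorem pushA_iterate_of_eq_push_true {s : Word M} (hs : pushA s = push true s) (k : ℕ) :
    pushA^[k] s = (push true)^[k] s := by
  induction k generalizing s with
  | zero => rfl
  | succ k ih => rw [Function.iterate_succ_apply, Function.iterate_succ_apply, hs, ih rfl]

theorem pushA_iterate_mulTop {x : M} (hx : x ≠ 1) {t : Word M} (ht : t.1 = 1) (k : ℕ) :
    pushA^[k] (mulTop x t) = (push true)^[k] (mulTop x t) :=
  pushA_iterate_of_eq_push_true (pushA_of_ne_one (by simpa [ht])) k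

variable (M) in
def act : Bicyclic ∗ M →* Function.End (Word M) :=
  lift (BicyclicPow.lift
      (fun p => if p.2 then pushA else push false)
      fun _ => funext pushA_push_false)
    mulTop

@[simp]
theorem act_inl_a : act M (inl Bicyclic.a) = pushA := rfl

@[simp]
theorem act_inl_abar : act M (inl Bicyclic.abar) = push false := rfl

@[simp]
theorem act_inr (g : M) : act M (inr g) = mulTop g := rfl

def blockA (x : M) (i : ℕ) (s : Word M) : Word M :=
  pushA^[i + 1] (mulTop x (pushA^[i + 1] s))

def blockB (y : M) (i : ℕ) (s : Word M) : Word M :=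
  (push false)^[i + 1] (mulTop y ((push false)^[i + 1] s))

end Action

/-- Phases of a left-to-right parse of a word as a product of letters of `M` and of blocks
`a^(i+1) x a^(i+1)` and `ā^(i+1) y ā^(i+1)`: `headA p` has read `a^p` of a head, and `tailA k`
still expects `a^(k+1)` of a tail, part or all of which may have been cancelled by the head of a
following block `ā^(j+1) y ā^(j+1)`; likewise for `headB` and `tailB`, except that tails of `ā`
are never cancelled. -/
inductive Phase
  | idle
  | headA (p : ℕ)
  | tailA (k : ℕ)
  | headB (p : ℕ)
  | tailB (k : ℕ)

section Decoder

variable {M : Type*} [Monoid M] [DecidableEq M]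
variable {N : Type*} [Monoid N] (x y : M) (ι : M →* N) (α β : ℕ → N)

def afterA (p : ℕ) (h : M) : Option (N × Phase) :=
  if h = 1 then some (1, .headA (p + 1)) else if h = x then some (α p, .tailA p) else none

def afterB (p : ℕ) (h : M) : Option (N × Phase) :=
  if h = 1 then some (1, .headB (p + 1)) else if h = y then some (β p, .tailB p) else none

def step : Phase → Bool × M → Option (N × Phase)
  | .idle, (true, h) => afterA x α 0 h
  | .idle, (false, h) => afterB y β 0 h
  | .headA p, (true, h) => afterA x α p h
  | .tailA 0, (true, h) => some (ι h, .idle)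
  | .tailA (k + 1), (true, h) =>
    if h = 1 then some (1, .tailA k) else if h = y then some (β k, .tailB k) else none
  | .tailA k, (false, h) => afterB y β (k + 1) h
  | .headB p, (false, h) => afterB y β p h
  | .tailB 0, (false, h) => some (ι h, .idle)
  | .tailB (k + 1), (false, h) => if h = 1 then some (1, .tailB k) else none
  | _, _ => none

def run : Phase → List (Bool × M) → Option N
  | .idle, [] => some 1
  | _, [] => none
  | s, c :: L =>
    match step x y ι α β s c with
    | some (o, s') => (run s' L).map (o * ·)
    | none => none

def decode (s : Word M) : Option N :=
  (run x y ι α β .idle s.2).map (ι s.1 * ·)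

variable {x y ι α β}

theorem decode_one (L : List (Bool × M)) : decode x y ι α β (1, L) = run x y ι α β .idle L := by
  simp [decode]

theorem decode_one_nil : decode x y ι α β (1, []) = some 1 := by
  simp [decode, run]

theorem decode_mulTop (g : M) (s : Word M) :
    decode x y ι α β (mulTop g s) = (decode x y ι α β s).map (ι g * ·) := by
  simp [decode, Option.map_map, Function.comp_def, mul_assoc]

theorem run_headA (hx : x ≠ 1) (p j : ℕ) (L : List (Bool × M)) :
    run x y ι α β (.headA p) (List.replicate j (true, 1) ++ (true, x) :: L) =
      (run x y ι α β (.tailA (p + j)) L).map (α (p + j) * ·) := by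
  induction j generalizing p with
  | zero => simp [run, step, afterA, hx]
  | succ j ih =>
    simp [List.replicate_succ, run, step, afterA, ih, Nat.add_right_comm, Nat.add_assoc,
      Function.comp_def]

theorem run_idle_blockA (hx : x ≠ 1) (i : ℕ) (L : List (Bool × M)) :
    run x y ι α β .idle (List.replicate i (true, 1) ++ (true, x) :: L) =
      (run x y ι α β (.tailA i) L).map (α i * ·) := by
  cases i with
  | zero => simp [run, step, afterA, hx]
  | succ i =>
    simp [List.replicate_succ, run, step, afterA, run_headA hx, Nat.add_comm, Function.comp_def]

theorem run_tailA_replicate (k j : ℕ) (L : List (Bool × M)) :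
    run x y ι α β (.tailA (k + j)) (List.replicate j (true, 1) ++ L) =
      run x y ι α β (.tailA k) L := by
  induction j with
  | zero => rfl
  | succ j ih => simp [List.replicate_succ, ← Nat.add_assoc, run, step, ih]

theorem run_tailA (k : ℕ) (g : M) (L : List (Bool × M)) :
    run x y ι α β (.tailA k) (List.replicate k (true, 1) ++ (true, g) :: L) =
      decode x y ι α β (g, L) := by
  simpa [run, step, decode] using run_tailA_replicate (x := x) (y := y) (ι := ι) (α := α)
    (β := β) 0 k ((true, g) :: L)

theorem run_tailA_succ (hy : y ≠ 1) (k : ℕ) (L : List (Bool × M)) :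
    run x y ι α β (.tailA (k + 1)) ((true, y) :: L) =
      (run x y ι α β (.tailB k) L).map (β k * ·) := by
  simp [run, step, hy]

theorem run_headB (hy : y ≠ 1) (p j : ℕ) (L : List (Bool × M)) :
    run x y ι α β (.headB p) (List.replicate j (false, 1) ++ (false, y) :: L) =
      (run x y ι α β (.tailB (p + j)) L).map (β (p + j) * ·) := by
  induction j generalizing p with
  | zero => simp [run, step, afterB, hy]
  | succ j ih =>
    simp [List.replicate_succ, run, step, afterB, ih, Nat.add_right_comm, Nat.add_assoc,
      Function.comp_def]

theorem run_idle_blockB (hy : y ≠ 1) (j : ℕ) (L : List (Bool × M)) :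
    run x y ι α β .idle (List.replicate j (false, 1) ++ (false, y) :: L) =
      (run x y ι α β (.tailB j) L).map (β j * ·) := by
  cases j with
  | zero => simp [run, step, afterB, hy]
  | succ j =>
    simp [List.replicate_succ, run, step, afterB, run_headB hy, Nat.add_comm, Function.comp_def]

theorem run_tailA_blockB (hy : y ≠ 1) (k j : ℕ) (L : List (Bool × M)) :
    run x y ι α β (.tailA k) (List.replicate j (false, 1) ++ (false, y) :: L) =
      (run x y ι α β (.tailB (k + 1 + j)) L).map (β (k + 1 + j) * ·) := by
  rw [← run_headB hy]
  cases j <;> simp [List.replicate_succ, run, step]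

theorem run_tailB (k : ℕ) (g : M) (L : List (Bool × M)) :
    run x y ι α β (.tailB k) (List.replicate k (false, 1) ++ (false, g) :: L) =
      decode x y ι α β (g, L) := by
  induction k with
  | zero => simp [run, step, decode]
  | succ k ih => simp [List.replicate_succ, run, step, ih]

theorem exists_of_run_tailB {k : ℕ} {L : List (Bool × M)} {v : N}
    (h : run x y ι α β (.tailB k) L = some v) :
    ∃ g R, L = List.replicate k (false, 1) ++ (false, g) :: R ∧
      decode x y ι α β (g, R) = some v := by
  induction k generalizing L with
  | zero =>
    obtain _ | ⟨⟨_ | _, g⟩, R⟩ := L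
    · simp [run] at h
    · exact ⟨g, R, rfl, by rwa [← run_tailB 0]⟩
    · simp [run, step] at h
  | succ k ih =>
    obtain _ | ⟨⟨_ | _, g⟩, R⟩ := L
    · simp [run] at h
    · by_cases hg : g = 1
      · subst hg
        obtain ⟨g', R', rfl, h'⟩ := ih (by simpa [run, step] using h)
        exact ⟨g', R', by rw [List.replicate_succ, List.cons_append], h'⟩
      · simp [run, step, hg] at h
    · simp [run, step] at h

theorem exists_of_run_headB {p : ℕ} {L : List (Bool × M)} {v : N}
    (h : run x y ι α β (.headB p) L = some v) :
    ∃ j g R v', L = List.replicate j (false, 1) ++ (false, y) ::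
        (List.replicate (p + j) (false, 1) ++ (false, g) :: R) ∧
      decode x y ι α β (g, R) = some v' ∧ v = β (p + j) * v' := by
  induction L generalizing p with
  | nil => simp [run] at h
  | cons c L ih =>
    obtain ⟨_ | _, g⟩ := c
    · by_cases hg : g = 1
      · subst hg
        obtain ⟨j, g', R, v', rfl, hd, rfl⟩ := ih (by simpa [run, step, afterB] using h)
        exact ⟨j + 1, g', R, v', by simp [List.replicate_succ, Nat.add_right_comm, Nat.add_assoc],
          hd, by rw [Nat.add_right_comm, Nat.add_assoc]⟩
      · by_cases hgy : g = y
        · subst hgy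
          obtain ⟨v', hv', rfl⟩ : ∃ v', run x g ι α β (.tailB p) L = some v' ∧ β p * v' = v := by
            simpa [run, step, afterB, hg] using h
          obtain ⟨g', R, rfl, hd⟩ := exists_of_run_tailB hv'
          exact ⟨0, g', R, v', rfl, hd, rfl⟩
        · simp [run, step, afterB, hg, hgy] at h
    · simp [run, step] at h

theorem exists_eq_blockB_of_decode {g : M} {L : List (Bool × M)} {v : N}
    (hd : decode x y ι α β (1, (false, g) :: L) = some v) :
    ∃ q s v', blockB y q s = (1, (false, g) :: L) ∧ decode x y ι α β s = some v' ∧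
      v = β q * v' := by
  rw [decode_one] at hd
  obtain ⟨q, g', R, v', hL, hd', rfl⟩ := exists_of_run_headB (p := 0) (L := (false, g) :: L) hd
  refine ⟨q, (g', R), v', ?_, hd', by rw [Nat.zero_add]⟩
  rw [hL, blockB, push_iterate_succ, mulTop_apply, push_iterate_succ, mul_one, Nat.zero_add]

theorem decode_blockB (hy : y ≠ 1) (i : ℕ) (s : Word M) :
    decode x y ι α β (blockB y i s) = (decode x y ι α β s).map (β i * ·) := by
  rw [blockB, push_iterate_succ, mulTop_apply, push_iterate_succ, mul_one, decode_one,
    run_idle_blockB hy, run_tailB]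

theorem decode_pushA_iterate_mulTop (hx : x ≠ 1) (i : ℕ) {t : Word M} (ht : t.1 = 1) :
    decode x y ι α β (pushA^[i + 1] (mulTop x t)) =
      (run x y ι α β (.tailA i) t.2).map (α i * ·) := by
  rw [pushA_iterate_mulTop hx ht, push_iterate_succ, mulTop_apply, ht, mul_one, decode_one,
    run_idle_blockA hx]

theorem decode_blockA_of_pushA_eq (hx : x ≠ 1) (i : ℕ) {s : Word M}
    (hs : pushA s = push true s) :
    decode x y ι α β (blockA x i s) = (decode x y ι α β s).map (α i * ·) := by
  rw [blockA, pushA_iterate_of_eq_push_true hs,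
    decode_pushA_iterate_mulTop hx _ (by rw [push_iterate_succ]), push_iterate_succ, run_tailA]

/-- The tail `a^(i+1)` of the `A`-block cancels part of the head `ā^(q+1)` of the `B`-block
(`i < q`), all of it together with `x y` (`i = q`), or all of it with `a`s left over (`i > q`). -/
theorem decode_blockA_blockB (hx : x ≠ 1) (hxy : x * y = 1) {i : ℕ} (hαβ : α i * β i = 1)
    (q : ℕ) (s : Word M) :
    decode x y ι α β (blockA x i (blockB y q s)) =
      (decode x y ι α β s).map (α i * β q * ·) := by
  have hy : y ≠ 1 := by rintro rfl; exact hx (by simpa using hxy)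
  rcases lt_trichotomy i q with hiq | rfl | hiq
  · obtain ⟨d, rfl⟩ : ∃ d, q = i + 1 + d := ⟨q - i - 1, by omega⟩
    rw [blockA, blockB, pushA_iterate_push_false_iterate_of_le (by omega),
      show i + 1 + d + 1 - (i + 1) = d + 1 by omega,
      decode_pushA_iterate_mulTop hx _ (by rw [push_iterate_succ])]
    simp only [push_iterate_succ, mulTop_apply, mul_one]
    rw [run_tailA_blockB hy, run_tailB]
    simp [Function.comp_def, mul_assoc]
  · rw [blockA, blockB, pushA_iterate_push_false_iterate_of_le le_rfl, Nat.sub_self,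
      Function.iterate_zero_apply]
    simp only [mulTop_apply, ← mul_assoc, hxy, one_mul, Prod.mk.eta]
    rw [pushA_iterate_push_false_iterate_of_le le_rfl, Nat.sub_self, Function.iterate_zero_apply,
      hαβ]
    simp
  · obtain ⟨d, rfl⟩ : ∃ d, i = q + 1 + d := ⟨i - q - 1, by omega⟩
    rw [blockA, blockB, pushA_iterate_push_false_iterate_of_ge (by omega),
      show q + 1 + d + 1 - (q + 1) = d + 1 by omega,
      pushA_iterate_of_eq_push_true (s := mulTop y _)
        (pushA_of_ne_one (by simpa [push_iterate_succ])),
      decode_pushA_iterate_mulTop hx _ (by rw [push_iterate_succ])]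
    simp only [push_iterate_succ, mulTop_apply, mul_one]
    rw [run_tailA_replicate, run_tailA_succ hy, run_tailB]
    simp [Function.comp_def, mul_assoc]

theorem decode_blockA (hx : x ≠ 1) (hxy : x * y = 1) {i : ℕ} (hαβ : α i * β i = 1)
    {s : Word M} {v : N} (hs : decode x y ι α β s = some v) :
    decode x y ι α β (blockA x i s) = some (α i * v) := by
  rcases pushA_eq_push_true_or s with hpush | ⟨h, L, rfl⟩
  · rw [decode_blockA_of_pushA_eq hx i hpush, hs, Option.map_some]
  · obtain ⟨q, s, v, hq, hs', rfl⟩ := exists_eq_blockB_of_decode hs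
    rw [← hq, decode_blockA_blockB hx hxy hαβ, hs', Option.map_some, mul_assoc]

end Decoder

section Morphism

variable {M : Type*} [Monoid M] (x y : M) {n : ℕ}

def genImage : Fin n × Bool → Bicyclic ∗ M
  | (i, true) => inl Bicyclic.a ^ (i.1 + 1) * inr x * inl Bicyclic.a ^ (i.1 + 1)
  | (i, false) => inl Bicyclic.abar ^ (i.1 + 1) * inr y * inl Bicyclic.abar ^ (i.1 + 1)

theorem genImage_true_mul_genImage_false (hxy : x * y = 1) (i : Fin n) :
    genImage x y (i, true) * genImage x y (i, false) = 1 := by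
  have ha : (inl Bicyclic.a : Bicyclic ∗ M) ^ (i.1 + 1) * inl Bicyclic.abar ^ (i.1 + 1) = 1 :=
    pow_mul_pow_eq_one _ (by rw [← map_mul, Bicyclic.a_mul_abar, map_one])
  have hxy' : (inr x : Bicyclic ∗ M) * inr y = 1 := by rw [← map_mul, hxy, map_one]
  calc genImage x y (i, true) * genImage x y (i, false)
      = inl Bicyclic.a ^ (i.1 + 1) *
          (inr x * (inl Bicyclic.a ^ (i.1 + 1) * inl Bicyclic.abar ^ (i.1 + 1)) * inr y) *
          inl Bicyclic.abar ^ (i.1 + 1) := by simp only [genImage, mul_assoc]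
    _ = 1 := by rw [ha, mul_one, hxy', mul_one, ha]

variable {x y} in
def toBicyclicCoprod (hxy : x * y = 1) (n : ℕ) : BicyclicPow n ∗ M →* Bicyclic ∗ M :=
  lift (BicyclicPow.lift (genImage x y) (genImage_true_mul_genImage_false x y hxy)) inr

variable (n) in
def inlGen (b : Bool) (i : ℕ) : BicyclicPow n ∗ M :=
  if h : i < n then inl (BicyclicPow.gen (⟨i, h⟩, b)) else 1

theorem inlGen_true_mul_inlGen_false (i : Fin n) :
    inlGen n true i * inlGen (M := M) n false i = 1 := by
  simp [inlGen, ← map_mul, BicyclicPow.gen_true_mul_gen_false]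

variable [DecidableEq M]

abbrev decodeBicyclicPow : Word M → Option (BicyclicPow n ∗ M) :=
  decode x y inr (inlGen n true) (inlGen n false)

variable {x y} (hxy : x * y = 1)

theorem act_toBicyclicCoprod_inl_gen_true (i : Fin n) (s : Word M) :
    act M (toBicyclicCoprod hxy n (inl (BicyclicPow.gen (i, true)))) s = blockA x i s := by
  simp only [toBicyclicCoprod, lift_apply_inl, BicyclicPow.lift_gen, genImage, map_mul, map_pow,
    act_inl_a, act_inr]
  rfl

theorem act_toBicyclicCoprod_inl_gen_false (i : Fin n) (s : Word M) :
    act M (toBicyclicCoprod hxy n (inl (BicyclicPow.gen (i, false)))) s = blockB y i s := by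
  simp only [toBicyclicCoprod, lift_apply_inl, BicyclicPow.lift_gen, genImage, map_mul, map_pow,
    act_inl_abar, act_inr]
  rfl

def decodable : Submonoid (BicyclicPow n ∗ M) where
  carrier := {w | ∀ s v, decodeBicyclicPow x y (n := n) s = some v →
    decodeBicyclicPow x y (act M (toBicyclicCoprod hxy n w) s) = some (w * v)}
  one_mem' _ _ hs := by rwa [map_one, map_one, one_mul]
  mul_mem' {w₁ w₂} h₁ h₂ s v hs := by
    rw [map_mul, map_mul, mul_assoc]
    exact h₁ _ _ (h₂ _ _ hs)

theorem inr_mem_decodable (g : M) : inr g ∈ decodable hxy (n := n) := fun s v hs => by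
  unfold decodeBicyclicPow at hs ⊢
  rw [toBicyclicCoprod, lift_apply_inr, act_inr, decode_mulTop, hs, Option.map_some]

theorem inl_gen_mem_decodable (hx : x ≠ 1) (p : Fin n × Bool) :
    inl (BicyclicPow.gen p) ∈ decodable hxy := fun s v hs => by
  have hy : y ≠ 1 := by rintro rfl; exact hx (by simpa using hxy)
  unfold decodeBicyclicPow at hs ⊢
  obtain ⟨i, _ | _⟩ := p
  · rw [act_toBicyclicCoprod_inl_gen_false, decode_blockB hy, hs]
    simp [inlGen]
  · rw [act_toBicyclicCoprod_inl_gen_true]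
    simpa [inlGen] using decode_blockA hx hxy (inlGen_true_mul_inlGen_false i) hs

theorem decodeBicyclicPow_act_toBicyclicCoprod (hx : x ≠ 1) (w : BicyclicPow n ∗ M)
    {s : Word M} {v : BicyclicPow n ∗ M} (hs : decodeBicyclicPow x y s = some v) :
    decodeBicyclicPow x y (act M (toBicyclicCoprod hxy n w) s) = some (w * v) := by
  suffices w ∈ decodable hxy from this s v hs
  induction w using Monoid.Coprod.induction_on with
  | inl b =>
    have : Submonoid.closure (Set.range BicyclicPow.gen) ≤ (decodable hxy (n := n)).comap inl :=
      Submonoid.closure_le.2 <| Set.range_subset_iff.2 (inl_gen_mem_decodable hxy hx)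
    rw [BicyclicPow.closure_range_gen] at this
    exact this (Submonoid.mem_top b)
  | inr g => exact inr_mem_decodable hxy g
  | mul w₁ w₂ h₁ h₂ => exact mul_mem h₁ h₂

end Morphism

end BicyclicCoprod

theorem bicyclicPow_free_product_embeds_general
    {M : Type} [Monoid M] (hM : {x : M | ∃ y : M, x * y = 1} ≠ {1})
    (n : ℕ) :
    ∃ φ : Monoid.Coprod (BicyclicPow n) M →* Monoid.Coprod Bicyclic M,
      (φ : Monoid.Coprod (BicyclicPow n) M → Monoid.Coprod Bicyclic M) ⁻¹' {1}
        = {1} := by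
  classical
  obtain ⟨x, ⟨y, hxy⟩, hx⟩ : ∃ x ∈ {x : M | ∃ y : M, x * y = 1}, x ≠ 1 := by
    contrapose! hM
    exact Set.eq_singleton_iff_unique_mem.2 ⟨⟨1, one_mul 1⟩, hM⟩
  refine ⟨BicyclicCoprod.toBicyclicCoprod hxy n, Set.ext fun w => ⟨fun hw => ?_, fun hw => ?_⟩⟩
  · have hdec := BicyclicCoprod.decodeBicyclicPow_act_toBicyclicCoprod hxy hx w
      BicyclicCoprod.decode_one_nil
    rw [Set.mem_preimage.1 hw, map_one, mul_one] at hdec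
    exact Option.some_injective _ (hdec.symm.trans BicyclicCoprod.decode_one_nil)
  · rw [Set.mem_preimage, Set.mem_singleton_iff.1 hw, map_one, Set.mem_singleton_iff]

/-- Let `M` be a monoid whose set `R₁(M) = {x | ∃ y, x·y = 1}`
of right-invertible elements is not `{1}`. Then for every `n ≥ 1` there is a
monoid morphism `φ : 𝔹^(n) ∗ M →* 𝔹 ∗ M` with `φ⁻¹(1) = {1}`. -/
theorem bicyclicPow_free_product_embeds
    {M : Type} [Monoid M] (hM : {x : M | ∃ y : M, x * y = 1} ≠ {1})
    (n : ℕ) (hn : 1 ≤ n) :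
    ∃ φ : Monoid.Coprod (BicyclicPow n) M →* Monoid.Coprod Bicyclic M,
      (φ : Monoid.Coprod (BicyclicPow n) M → Monoid.Coprod Bicyclic M) ⁻¹' {1}
        = {1} :=
  bicyclicPow_free_product_embeds_general hM n
end

section
/- Let 𝔹_p * 𝔹_q * 𝔹_r * M be presented with generators p, p̄, q, q̄, r, r̄ and the generators of M, with relations p p̄ = 1, q q̄ = 1, r r̄ = 1, and the relations of M. Suppose there are words u, v over the generators of M with [uv] = 1 and [u] ≠ 1. Then for any words f, g over {r, r̄} ∪ X (X the generators of M), the elements [f r v r̄ g] and [f r u r̄ g] are not equal to 1. -/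
open FreeMonoid

variable {X : Type}

/-- Generators of `𝔹_p ∗ 𝔹_q ∗ 𝔹_r ∗ M`: the letters `s, s̄` for `s ∈ {p,q,r}`
(encoded as `Sum.inl (i, b)` with `i = 0, 1, 2` for `p, q, r` and `b = true`
for `s`, `b = false` for `s̄`) together with the generators `X` of `M`. -/
abbrev Gen3 (X : Type) := (Fin 3 × Bool) ⊕ X

/-- The relations of `𝔹_p ∗ 𝔹_q ∗ 𝔹_r ∗ M`: `s s̄ = 1` for `s ∈ {p, q, r}`,
together with the relations `R` of `M` (on words over `X`). -/
def prodRel (R : FreeMonoid X → FreeMonoid X → Prop) :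
    FreeMonoid (Gen3 X) → FreeMonoid (Gen3 X) → Prop := fun w₁ w₂ =>
  (∃ s : Fin 3, w₁ = of (Sum.inl (s, true)) * of (Sum.inl (s, false)) ∧ w₂ = 1) ∨
  (∃ x y : FreeMonoid X, R x y ∧
    w₁ = FreeMonoid.map (Sum.inr : X → Gen3 X) x ∧
    w₂ = FreeMonoid.map (Sum.inr : X → Gen3 X) y)

/-- Embedding of words over the generators of `M` into words over all generators. -/
def embM : FreeMonoid X →* FreeMonoid (Gen3 X) :=
  FreeMonoid.map Sum.inr

/-- Embedding of words over `{r, r̄} ∪ X` (encoded as `Bool ⊕ X`, `true ↦ r`,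
`false ↦ r̄`) into words over all generators. -/
def embRX : FreeMonoid (Bool ⊕ X) →* FreeMonoid (Gen3 X) :=
  FreeMonoid.map (Sum.elim (fun b => Sum.inl ((2 : Fin 3), b)) Sum.inr)


/-!
Let the free product act on the left of `Option (M × List M)`, where `some (m₀, [m₁, …, mₖ])`
stands for the word `m₀ r̄ m₁ r̄ ⋯ r̄ mₖ` and `none` is a sink: a letter `r` cancels the leading
`r̄` when `m₀ = 1` and falls into the sink otherwise. This respects `r r̄ = 1` and the relations
of `M`. Reading `f r w r̄ g` from the right, `r̄` is pushed, `[w] ≠ 1` lands in front of it, and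
`r` drops into the sink, which no letter leaves; the identity, however, fixes `some (1, [])`.
So `[f r w r̄ g] = 1` forces `[w] = 1` in `M`, and `[v] = 1` in `M` would give `[u] = [uv] = 1`.
-/

section StackAction

variable {M : Type*} [Monoid M]

@[simps]
def mulLeftStack : M →* Function.End (Option (M × List M)) where
  toFun a := Option.map fun s => (a * s.1, s.2)
  map_one' := by
    funext o
    cases o <;> simp [Function.End.one_def]
  map_mul' a b := by
    change Option.map _ = Option.map _ ∘ Option.map _
    rw [Option.map_comp_map]
    congr
    funext s
    simp [mul_assoc]

def pushRbar : Function.End (Option (M × List M)) :=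
  Option.map fun s => (1, s.1 :: s.2)

open Classical in
noncomputable def popR : Function.End (Option (M × List M))
  | some (m, m' :: L) => if m = 1 then some (m', L) else none
  | _ => none

theorem popR_pushRbar (o : Option (M × List M)) : popR (pushRbar o) = o := by
  cases o <;> simp [popR, pushRbar]

theorem popR_mulLeftStack_pushRbar {a : M} (ha : a ≠ 1) (o : Option (M × List M)) :
    popR (mulLeftStack a (pushRbar o)) = none := by
  cases o <;> simp [popR, pushRbar, ha]

end StackAction

section StackRep

variable (R : FreeMonoid X → FreeMonoid X → Prop)

noncomputable def stackRep :
    FreeMonoid (Gen3 X) →* Function.End (Option ((conGen R).Quotient × List (conGen R).Quotient)) :=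
  FreeMonoid.lift fun
    | Sum.inr x => mulLeftStack ((of x : FreeMonoid X) : (conGen R).Quotient)
    | Sum.inl (i, b) => if i = 2 then (if b then popR else pushRbar) else 1

theorem stackRep_mul_apply (w₁ w₂ : FreeMonoid (Gen3 X))
    (o : Option ((conGen R).Quotient × List (conGen R).Quotient)) :
    stackRep R (w₁ * w₂) o = stackRep R w₁ (stackRep R w₂ o) := by
  rw [map_mul]
  rfl

theorem stackRep_r : stackRep R (of (Sum.inl ((2 : Fin 3), true))) = popR := rfl

theorem stackRep_rbar : stackRep R (of (Sum.inl ((2 : Fin 3), false))) = pushRbar := rfl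

theorem stackRep_embM (x : FreeMonoid X) :
    stackRep R (embM x) = mulLeftStack (x : (conGen R).Quotient) :=
  DFunLike.congr_fun (FreeMonoid.hom_eq (f := (stackRep R).comp embM)
    (g := mulLeftStack.comp (conGen R).mk') fun _ => rfl) x

theorem stackRep_apply_none (w : FreeMonoid (Gen3 X)) : stackRep R w none = none := by
  induction w using FreeMonoid.inductionOn' with
  | one => rfl
  | of_mul c w ih =>
    rw [stackRep_mul_apply, ih]
    rcases c with ⟨i, b⟩ | x
    · simp only [stackRep, FreeMonoid.lift_eval_of]
      split_ifs <;> rfl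
    · rfl

theorem conGen_le_ker_stackRep : conGen (prodRel R) ≤ Con.ker (stackRep R) := by
  refine Con.conGen_le.mpr ?_
  rintro _ _ (⟨i, rfl, rfl⟩ | ⟨x, y, hxy, rfl, rfl⟩)
  · rw [Con.ker_rel, map_one]
    funext o
    rw [stackRep_mul_apply]
    by_cases hi : i = 2
    · subst hi
      rw [stackRep_r, stackRep_rbar, popR_pushRbar]
      rfl
    · simp only [stackRep, FreeMonoid.lift_eval_of, if_neg hi]
      rfl
  · have hM : (x : (conGen R).Quotient) = y := (Con.eq _).mpr (ConGen.Rel.of _ _ hxy)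
    change stackRep R (embM x) = stackRep R (embM y)
    rw [stackRep_embM, stackRep_embM, hM]

end StackRep

section

variable {R : FreeMonoid X → FreeMonoid X → Prop}

theorem conGen_embM {a b : FreeMonoid X} (h : conGen R a b) :
    conGen (prodRel R) (embM a) (embM b) :=
  (Con.conGen_le (c := (conGen (prodRel R)).comap embM (map_mul embM)) |>.mpr
    (fun x y hxy => ConGen.Rel.of _ _ (Or.inr ⟨x, y, hxy, rfl, rfl⟩))) h

theorem conGen_one_of_conGen_rConj_one {w : FreeMonoid X} {f g : FreeMonoid (Bool ⊕ X)}
    (h : conGen (prodRel R)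
      (embRX f * of (Sum.inl ((2 : Fin 3), true)) * embM w *
        of (Sum.inl ((2 : Fin 3), false)) * embRX g) 1) :
    conGen R w 1 := by
  by_contra hw
  have hw' : (w : (conGen R).Quotient) ≠ 1 := fun h1 =>
    hw (Con.eq _ |>.mp (h1.trans Con.coe_one.symm))
  have hfix := congrArg (· (some (1, []))) ((Con.ker_rel _).mp (conGen_le_ker_stackRep R h))
  simp only [map_one, stackRep_mul_apply, stackRep_r, stackRep_rbar, stackRep_embM,
    popR_mulLeftStack_pushRbar hw', stackRep_apply_none] at hfix
  exact Option.some_ne_none _ hfix.symm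

end

/-- In `𝔹_p ∗ 𝔹_q ∗ 𝔹_r ∗ M`, if `u, v` are words over the
generators of `M` with `[uv] = 1` and `[u] ≠ 1`, then for all words `f, g` over
`{r, r̄} ∪ X`, the elements `[f r v r̄ g]` and `[f r u r̄ g]` are not `1`. -/
theorem conjugates_nontrivial (R : FreeMonoid X → FreeMonoid X → Prop)
    (u v : FreeMonoid X)
    (huv : conGen (prodRel R) (embM u * embM v) 1)
    (hu : ¬ conGen (prodRel R) (embM u) 1)
    (f g : FreeMonoid (Bool ⊕ X)) :
    ¬ conGen (prodRel R)
        (embRX f * of (Sum.inl ((2 : Fin 3), true)) * embM v *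
          of (Sum.inl ((2 : Fin 3), false)) * embRX g) 1 ∧
    ¬ conGen (prodRel R)
        (embRX f * of (Sum.inl ((2 : Fin 3), true)) * embM u *
          of (Sum.inl ((2 : Fin 3), false)) * embRX g) 1 := by
  have embM_one {w : FreeMonoid X} (hw : conGen R w 1) : conGen (prodRel R) (embM w) 1 := by
    simpa using conGen_embM hw
  refine ⟨fun hv => hu ?_, fun hu' => hu (embM_one (conGen_one_of_conGen_rConj_one hu'))⟩
  have hv1 := embM_one (conGen_one_of_conGen_rConj_one hv)
  have hu_uv : conGen (prodRel R) (embM u) (embM u * embM v) := by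
    simpa using (conGen (prodRel R)).mul ((conGen (prodRel R)).refl (embM u)) hv1.symm
  exact (conGen (prodRel R)).trans hu_uv huv
end

section
/- Let M be a monoid with R₁(M) ≠ {1}, fix u, v words over generators of M with [uv] = 1 and [u] ≠ 1, and define the morphism φ on words over {p, p̄, q, q̄} ∪ X by φ(x) = x for generators x of M, φ(p) = rr, φ(p̄) = r̄r̄, φ(q) = rur, φ(q̄) = r̄vr̄. Then for every word w over {p, p̄, q, q̄} ∪ X, if [φ(w)] = 1 in 𝔹_r * M then [w] = 1 in 𝔹_p * 𝔹_q * M. -/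
/-!
Let `𝔹_r * M` act on stacks `m r^ε₁ m₁ r^ε₂ m₂ ⋯` by pushing `r̄`, and pushing `r` too unless the
coefficient `m` is `1` and an `r̄` lies on top, which `r` then cancels. Acting by `φ(w)` on the
empty stack, the stack always consists of two-entry blocks, each the trace of a letter `p, p̄, q, q̄`
of `w` or of a pair `q p̄`, `p q̄`: since `[u] ≠ 1` and hence `[v] ≠ 1`, an `r` of `φ(p)` or `φ(q)`
cancels an `r̄` of `φ(p̄)` or `φ(q̄)` only in the patterns coming from `p p̄ = 1`, `q q̄ = 1` and
`[uv] = 1`. Reading off the blocks recovers `[w]` in `𝔹_p * 𝔹_q * M`, and if `[φ(w)] = 1` the stack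
is empty, so `[w] = 1`.
-/

open FreeMonoid

variable {X : Type}

/-- Generators of `𝔹_p ∗ 𝔹_q ∗ M`: `Sum.inl (true, b)` is `p` (`b = true`) or
`p̄` (`b = false`), `Sum.inl (false, b)` is `q` or `q̄`; `Sum.inr x` are the
generators of `M`. -/
abbrev PQGen (X : Type) := (Bool × Bool) ⊕ X

/-- Generators of `𝔹_r ∗ M`: `Sum.inl true` is `r`, `Sum.inl false` is `r̄`. -/
abbrev RGen (X : Type) := Bool ⊕ X

/-- Relations of `𝔹_p ∗ 𝔹_q ∗ M`: `p p̄ = 1`, `q q̄ = 1` and the relations `R` of `M`. -/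
def pqRel (R : FreeMonoid X → FreeMonoid X → Prop) :
    FreeMonoid (PQGen X) → FreeMonoid (PQGen X) → Prop := fun w₁ w₂ =>
  (∃ s : Bool, w₁ = of (Sum.inl (s, true)) * of (Sum.inl (s, false)) ∧ w₂ = 1) ∨
  (∃ x y : FreeMonoid X, R x y ∧
    w₁ = FreeMonoid.map (Sum.inr : X → PQGen X) x ∧
    w₂ = FreeMonoid.map (Sum.inr : X → PQGen X) y)

/-- Relations of `𝔹_r ∗ M`: `r r̄ = 1` and the relations `R` of `M`. -/
def rRel (R : FreeMonoid X → FreeMonoid X → Prop) :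
    FreeMonoid (RGen X) → FreeMonoid (RGen X) → Prop := fun w₁ w₂ =>
  (w₁ = of (Sum.inl true) * of (Sum.inl false) ∧ w₂ = 1) ∨
  (∃ x y : FreeMonoid X, R x y ∧
    w₁ = FreeMonoid.map (Sum.inr : X → RGen X) x ∧
    w₂ = FreeMonoid.map (Sum.inr : X → RGen X) y)

/-- Embedding of words over `X` into words over `{r, r̄} ∪ X`. -/
def embR : FreeMonoid X →* FreeMonoid (RGen X) :=
  FreeMonoid.map Sum.inr

/-- The morphism `φ` determined by `φ(x) = x` for generators `x` of `M`,
`φ(p) = rr`, `φ(p̄) = r̄r̄`, `φ(q) = rur`, `φ(q̄) = r̄vr̄`. -/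
def phiMor (u v : FreeMonoid X) : FreeMonoid (PQGen X) →* FreeMonoid (RGen X) :=
  FreeMonoid.lift fun g =>
    match g with
    | Sum.inl (true, true) => of (Sum.inl true) * of (Sum.inl true)
    | Sum.inl (true, false) => of (Sum.inl false) * of (Sum.inl false)
    | Sum.inl (false, true) => of (Sum.inl true) * embR u * of (Sum.inl true)
    | Sum.inl (false, false) => of (Sum.inl false) * embR v * of (Sum.inl false)
    | Sum.inr x => of (Sum.inr x)

/-- `(m, [(ε₁, m₁), (ε₂, m₂), …])` stands for `m r^ε₁ m₁ r^ε₂ m₂ ⋯`, where `r^true = r` and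
`r^false = r̄`. -/
abbrev Stack (K : Type*) := K × List (Bool × K)

namespace Stack

variable {K : Type*} [Monoid K]

def leftMul (k : K) (s : Stack K) : Stack K := (k * s.1, s.2)

def rbarMul (s : Stack K) : Stack K := (1, (false, s.1) :: s.2)

open Classical in
noncomputable def rMul : Stack K → Stack K
  | (m, (false, m₁) :: ℓ) => if m = 1 then (m₁, ℓ) else (1, (true, m) :: (false, m₁) :: ℓ)
  | (m, ℓ) => (1, (true, m) :: ℓ)

@[simp]
theorem rMul_one_false_cons (m₁ : K) (ℓ : List (Bool × K)) :
    rMul (1, (false, m₁) :: ℓ) = (m₁, ℓ) := by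
  simp [rMul]

@[simp]
theorem rMul_true_cons (m m₁ : K) (ℓ : List (Bool × K)) :
    rMul (m, (true, m₁) :: ℓ) = (1, (true, m) :: (true, m₁) :: ℓ) :=
  rfl

theorem rMul_of_ne_one {m : K} (hm : m ≠ 1) (ℓ : List (Bool × K)) :
    rMul (m, ℓ) = (1, (true, m) :: ℓ) := by
  rcases ℓ with _ | ⟨⟨_ | _, _⟩, _⟩ <;> simp [rMul, hm]

@[simp]
theorem rMul_rbarMul (s : Stack K) : rMul (rbarMul s) = s := by
  simp [rbarMul]

end Stack

namespace PhiMor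

open Stack

variable (R : FreeMonoid X → FreeMonoid X → Prop)

abbrev RMon := (conGen (rRel R)).Quotient

abbrev PQMon := (conGen (pqRel R)).Quotient

noncomputable def stackAct : FreeMonoid (RGen X) →* Function.End (Stack (RMon R)) :=
  FreeMonoid.lift fun
    | .inl true => rMul
    | .inl false => rbarMul
    | .inr x => leftMul (of (.inr x) : FreeMonoid (RGen X))

theorem stackAct_mul_apply (a b : FreeMonoid (RGen X)) (s : Stack (RMon R)) :
    stackAct R (a * b) s = stackAct R a (stackAct R b s) := by
  rw [map_mul]; rfl

theorem stackAct_of_r : stackAct R (of (.inl true)) = rMul :=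
  rfl

theorem stackAct_of_rbar : stackAct R (of (.inl false)) = rbarMul :=
  rfl

theorem stackAct_embR (w : FreeMonoid X) (s : Stack (RMon R)) :
    stackAct R (embR w) s = leftMul (embR w : RMon R) s := by
  induction w using FreeMonoid.recOn generalizing s with
  | one => simp only [map_one, Con.coe_one, leftMul, one_mul]; rfl
  | of_mul x w ih =>
    rw [map_mul, map_mul]
    change stackAct R (embR (of x)) (stackAct R (embR w) s) = _
    rw [ih]
    simp only [leftMul, Con.coe_mul, mul_assoc]
    rfl

theorem stackAct_eq_of_conGen {a b : FreeMonoid (RGen X)} (h : conGen (rRel R) a b) :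
    stackAct R a = stackAct R b := by
  refine (Con.ker_rel _).1 (Con.conGen_le.2 (fun a b hab => ?_) h)
  rw [Con.ker_rel]
  rcases hab with ⟨rfl, rfl⟩ | ⟨x, y, hxy, rfl, rfl⟩
  · funext s
    exact rMul_rbarMul s
  · funext s
    change stackAct R (embR x) s = stackAct R (embR y) s
    have hxy' : (embR x : RMon R) = embR y :=
      (Con.eq _).2 (ConGen.Rel.of _ _ (Or.inr ⟨x, y, hxy, rfl, rfl⟩))
    rw [stackAct_embR, stackAct_embR, hxy']

/-- Coefficients on the stacks met below are words over `X`; sending `r` to `p` merely makes the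
decoding `toPQ` a homomorphism on all of `𝔹_r * M`. -/
def rToPQ : RGen X → PQGen X := Sum.map (fun b => (true, b)) id

theorem pqRel_map_rToPQ {a b : FreeMonoid (RGen X)} (h : rRel R a b) :
    pqRel R (map rToPQ a) (map rToPQ b) := by
  rcases h with ⟨rfl, rfl⟩ | ⟨x, y, hxy, rfl, rfl⟩
  · exact Or.inl ⟨true, rfl, rfl⟩
  · exact Or.inr ⟨x, y, hxy, map_map, map_map⟩

noncomputable def toPQ : RMon R →* PQMon R :=
  (conGen (rRel R)).lift ((conGen (pqRel R)).mk'.comp (map rToPQ)) <|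
    Con.conGen_le.2 fun _ _ h =>
      (Con.ker_rel _).2 ((Con.eq _).2 (ConGen.Rel.of _ _ (pqRel_map_rToPQ R h)))

theorem toPQ_of_inr (x : X) :
    toPQ R (of (.inr x) : FreeMonoid (RGen X)) = (of (.inr x) : FreeMonoid (PQGen X)) :=
  rfl

theorem coe_of_mul_coe_of_bar (s : Bool) :
    ((of (.inl (s, true)) : FreeMonoid (PQGen X)) : PQMon R) *
      ((of (.inl (s, false)) : FreeMonoid (PQGen X)) : PQMon R) = 1 :=
  (Con.eq _).2 (ConGen.Rel.of _ _ (Or.inl ⟨s, rfl, rfl⟩))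

inductive Block
  | p | q | pbar | qbar | qpbar | pqbar

variable (u v : FreeMonoid X)

def Block.top : Block → Bool × RMon R
  | .p => (true, 1)
  | .q => (true, embR u)
  | .pbar => (false, 1)
  | .qbar => (false, embR v)
  | .qpbar => (true, embR u)
  | .pqbar => (true, embR v)

def Block.lowerSign : Block → Bool
  | .p | .q => true
  | _ => false

def Block.word : Block → FreeMonoid (PQGen X)
  | .p => of (.inl (true, true))
  | .q => of (.inl (false, true))
  | .pbar => of (.inl (true, false))
  | .qbar => of (.inl (false, false))
  | .qpbar => of (.inl (false, true)) * of (.inl (true, false))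
  | .pqbar => of (.inl (true, true)) * of (.inl (false, false))

def blockStack : List (Block × RMon R) → List (Bool × RMon R)
  | [] => []
  | (b, m) :: bs => b.top R u v :: (b.lowerSign, m) :: blockStack bs

noncomputable def blockVal : List (Block × RMon R) → PQMon R
  | [] => 1
  | (b, m) :: bs => ((b.word : FreeMonoid (PQGen X)) : PQMon R) * toPQ R m * blockVal bs

def Represents (n : PQMon R) (s : Stack (RMon R)) : Prop :=
  ∃ m bs, s = (m, blockStack R u v bs) ∧ n = toPQ R m * blockVal R bs

variable {R u v}

theorem rMul_blockStack (m : RMon R) (bs : List (Block × RMon R)) :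
    rMul (m, blockStack R u v bs) = (1, (true, m) :: blockStack R u v bs) ∨
      ∃ m' bs', m = 1 ∧ (bs = (.pbar, m') :: bs' ∨ bs = (.qbar, m') :: bs') := by
  by_cases hm : m = 1
  · subst hm
    rcases bs with _ | ⟨⟨_ | _ | _ | _ | _ | _, m'⟩, bs'⟩ <;> simp [blockStack, Block.top, rMul]
  · exact Or.inl (rMul_of_ne_one hm _)

theorem represents_one : Represents R u v 1 (1, []) :=
  ⟨1, [], rfl, by simp [blockVal]⟩

theorem eq_one_of_represents {n : PQMon R} (h : Represents R u v n (1, [])) : n = 1 := by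
  obtain ⟨m, _ | _, hs, rfl⟩ := h
  · obtain rfl : m = 1 := (Prod.mk.inj hs).1.symm
    simp [blockVal]
  · simp [blockStack] at hs

theorem represents_push {n : PQMon R} {m : RMon R} {bs : List (Block × RMon R)}
    (h : n = toPQ R m * blockVal R bs) (b : Block) :
    Represents R u v ((b.word : FreeMonoid (PQGen X)) * n) (1, blockStack R u v ((b, m) :: bs)) :=
  ⟨1, (b, m) :: bs, rfl, by simp [h, blockVal, mul_assoc]⟩

theorem Represents.inr_mul {n : PQMon R} {s : Stack (RMon R)} (h : Represents R u v n s) (x : X) :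
    Represents R u v ((of (.inr x) : FreeMonoid (PQGen X)) * n)
      (stackAct R (phiMor u v (of (.inr x))) s) := by
  obtain ⟨m, bs, rfl, rfl⟩ := h
  exact ⟨_, bs, rfl, by rw [map_mul, toPQ_of_inr, mul_assoc]⟩

theorem Represents.pbar_mul {n : PQMon R} {s : Stack (RMon R)} (h : Represents R u v n s) :
    Represents R u v ((of (.inl (true, false)) : FreeMonoid (PQGen X)) * n)
      (stackAct R (phiMor u v (of (.inl (true, false)))) s) := by
  obtain ⟨m, bs, rfl, hn⟩ := h
  exact represents_push hn .pbar

theorem Represents.qbar_mul {n : PQMon R} {s : Stack (RMon R)} (h : Represents R u v n s) :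
    Represents R u v ((of (.inl (false, false)) : FreeMonoid (PQGen X)) * n)
      (stackAct R (phiMor u v (of (.inl (false, false)))) s) := by
  obtain ⟨m, bs, rfl, hn⟩ := h
  simp only [phiMor, FreeMonoid.lift_eval_of, stackAct_mul_apply, stackAct_embR, stackAct_of_rbar]
  have hs : rbarMul (leftMul (embR v : RMon R) (rbarMul (m, blockStack R u v bs))) =
      (1, blockStack R u v ((.qbar, m) :: bs)) := by
    simp [rbarMul, leftMul, blockStack, Block.top, Block.lowerSign]
  rw [hs]
  exact represents_push hn .qbar

theorem Represents.p_mul (hV : (embR v : RMon R) ≠ 1) {n : PQMon R} {s : Stack (RMon R)}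
    (h : Represents R u v n s) :
    Represents R u v ((of (.inl (true, true)) : FreeMonoid (PQGen X)) * n)
      (stackAct R (phiMor u v (of (.inl (true, true)))) s) := by
  obtain ⟨m, bs, rfl, hn⟩ := h
  simp only [phiMor, FreeMonoid.lift_eval_of, stackAct_mul_apply, stackAct_of_r]
  rcases rMul_blockStack m bs with hpush | ⟨m', bs, rfl, rfl | rfl⟩
  · rw [hpush]
    exact represents_push hn .p
  · refine ⟨m', bs, by simp [blockStack, Block.top, Block.lowerSign], ?_⟩
    simp [hn, blockVal, Block.word, ← mul_assoc, coe_of_mul_coe_of_bar]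
  · refine ⟨1, (.pqbar, m') :: bs, ?_, ?_⟩
    · simp [blockStack, Block.top, Block.lowerSign, rMul_of_ne_one hV]
    · simp [hn, blockVal, Block.word, mul_assoc]

theorem Represents.q_mul (hU : (embR u : RMon R) ≠ 1) (hUV : (embR u : RMon R) * embR v = 1)
    {n : PQMon R} {s : Stack (RMon R)} (h : Represents R u v n s) :
    Represents R u v ((of (.inl (false, true)) : FreeMonoid (PQGen X)) * n)
      (stackAct R (phiMor u v (of (.inl (false, true)))) s) := by
  obtain ⟨m, bs, rfl, hn⟩ := h
  simp only [phiMor, FreeMonoid.lift_eval_of, stackAct_mul_apply, stackAct_of_r, stackAct_embR]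
  rcases rMul_blockStack (u := u) (v := v) m bs with hpush | ⟨m', bs, rfl, rfl | rfl⟩
  · have hs : rMul (leftMul (embR u : RMon R) (rMul (m, blockStack R u v bs))) =
        (1, blockStack R u v ((.q, m) :: bs)) := by
      simp [hpush, leftMul, blockStack, Block.top, Block.lowerSign]
    rw [hs]
    exact represents_push hn .q
  · refine ⟨1, (.qpbar, m') :: bs, ?_, ?_⟩
    · simp [blockStack, Block.top, Block.lowerSign, leftMul, rMul_of_ne_one hU]
    · simp [hn, blockVal, Block.word, mul_assoc]
  · refine ⟨m', bs, ?_, ?_⟩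
    · simp [blockStack, Block.top, Block.lowerSign, leftMul, hUV]
    · simp [hn, blockVal, Block.word, ← mul_assoc, coe_of_mul_coe_of_bar]

theorem Represents.of_mul (hU : (embR u : RMon R) ≠ 1) (hUV : (embR u : RMon R) * embR v = 1)
    {n : PQMon R} {s : Stack (RMon R)} (h : Represents R u v n s) (g : PQGen X) :
    Represents R u v ((of g : FreeMonoid (PQGen X)) * n) (stackAct R (phiMor u v (of g)) s) := by
  have hV : (embR v : RMon R) ≠ 1 := fun hV => hU ((eq_one_iff_eq_one_of_mul_eq_one hUV).2 hV)
  rcases g with ⟨_ | _, _ | _⟩ | x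
  · exact h.qbar_mul
  · exact h.q_mul hU hUV
  · exact h.pbar_mul
  · exact h.p_mul hV
  · exact h.inr_mul x

theorem represents_phiMor (hU : (embR u : RMon R) ≠ 1) (hUV : (embR u : RMon R) * embR v = 1)
    (w : FreeMonoid (PQGen X)) : Represents R u v w (stackAct R (phiMor u v w) (1, [])) := by
  induction w using FreeMonoid.recOn with
  | one => exact represents_one
  | of_mul g w ih =>
    rw [map_mul, stackAct_mul_apply, Con.coe_mul]
    exact ih.of_mul hU hUV g

end PhiMor

/-- Let `M` be a monoid with `R₁(M) ≠ {1}`, witnessed by words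
`u, v` over the generators of `M` with `[uv] = 1` and `[u] ≠ 1`. Then for every
word `w` over `{p, p̄, q, q̄} ∪ X`, if `[φ(w)] = 1` in `𝔹_r ∗ M`, then
`[w] = 1` in `𝔹_p ∗ 𝔹_q ∗ M`. -/
theorem phi_reflects_identity (R : FreeMonoid X → FreeMonoid X → Prop)
    (u v : FreeMonoid X)
    (huv : conGen (rRel R) (embR u * embR v) 1)
    (hu : ¬ conGen (rRel R) (embR u) 1)
    (w : FreeMonoid (PQGen X))
    (hw : conGen (rRel R) (phiMor u v w) 1) :
    conGen (pqRel R) w 1 := by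
  have hU : (embR u : PhiMor.RMon R) ≠ 1 := fun h => hu ((Con.eq _).1 h)
  have hUV : (embR u : PhiMor.RMon R) * embR v = 1 := (Con.eq _).2 huv
  have h := PhiMor.represents_phiMor hU hUV w
  rw [PhiMor.stackAct_eq_of_conGen R hw, map_one] at h
  exact (Con.eq _).1 (PhiMor.eq_one_of_represents h)
end

section
/- For any monoids M₀ and M₁, the class of languages accepted by valence automata over the free product M₀ * M₁ is contained in the algebraic extension of VA(M₀) ∪ VA(M₁), i.e., VA(M₀ * M₁) ⊆ Alg(VA(M₀) ∪ VA(M₁)). -/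
/-- Languages over the universal alphabet `ℕ`. -/
abbrev Lang := Set (List ℕ)

/-- A valence automaton over a monoid `M`: a finite set of states, finitely
many edges labeled by a word over the input alphabet and an element of `M`,
an initial state and a set of final states. -/
structure VAut (M : Type*) [Monoid M] where
  Q : Type
  [fin : Fintype Q]
  edges : List (Q × List ℕ × M × Q)
  init : Q
  final : Q → Prop

/-- Runs of a valence automaton: `Run A q w m` holds if the automaton can go
from the initial state to state `q`, reading the word `w` and multiplying the
monoid labels to `m`. -/
inductive VAut.Run {M : Type*} [Monoid M] (A : VAut M) : A.Q → List ℕ → M → Prop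
  | nil : VAut.Run A A.init [] 1
  | step {q w m} {e : A.Q × List ℕ × M × A.Q} (he : e ∈ A.edges)
      (h : VAut.Run A q w m) (hq : e.1 = q) :
      VAut.Run A e.2.2.2 (w ++ e.2.1) (m * e.2.2.1)

/-- The language accepted by a valence automaton: words read by runs reaching a
final state with monoid value `1`. -/
def VAut.lang {M : Type*} [Monoid M] (A : VAut M) : Lang :=
  {w | ∃ q, A.final q ∧ VAut.Run A q w 1}

/-- `VA M`: the class of languages accepted by valence automata over `M`. -/
def VA (M : Type*) [Monoid M] : Set Lang := {L | ∃ A : VAut M, L = A.lang}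
/-- A grammar with language right-hand sides: nonterminals are a finite set of
symbols of the universal alphabet `ℕ`, and each production `A → L` rewrites the
nonterminal `A` to any word of the language `L` (over terminals and
nonterminals). -/
structure CGram where
  NT : Finset ℕ
  start : ℕ
  startMem : start ∈ NT
  prods : List (ℕ × Lang)
  lhsMem : ∀ p ∈ prods, p.1 ∈ NT

/-- One derivation step of a `CGram`. -/
def CGram.step (G : CGram) (u v : List ℕ) : Prop :=
  ∃ x z w p, p ∈ G.prods ∧ w ∈ p.2 ∧ u = x ++ [p.1] ++ z ∧ v = x ++ w ++ z

/-- The language generated by a `CGram`: terminal words derivable from the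
start symbol. -/
def CGram.lang (G : CGram) : Lang :=
  {w | Relation.ReflTransGen G.step [G.start] w ∧ ∀ a ∈ w, a ∉ G.NT}

/-- `Alg C`: the algebraic extension of a language class `C`, i.e. the
languages generated by grammars all of whose production right-hand sides lie in
`C`. -/
def Alg (C : Set Lang) : Set Lang :=
  {L | ∃ G : CGram, (∀ p ∈ G.prods, p.2 ∈ C) ∧ L = G.lang}

/-!
Subdividing edges, we may assume that every edge is labelled by an element of `M₀` or of `M₁`.
For each pair of states `(p, q)` a nonterminal derives the words read from `p` to `q` with value
`1`. Its right-hand sides are the languages of two automata, over `M₀` and over `M₁`, which use the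
edges labelled in their own factor and may jump from any `r` to any `r'` reading the nonterminal of
`(r, r')`; expanding the jumps gives soundness. Conversely, by uniqueness of reduced words in the
free product, a path of value `1` contains a one-factor block of value `1` not all of whose labels
are trivial; replacing it by a jump and inducting on the number of nontrivial labels gives
completeness.
-/

attribute [instance] VAut.fin

section Paths

variable {σ α : Type*}

inductive IsPath (E : List (σ × List ℕ × α × σ)) : σ → List (σ × List ℕ × α × σ) → σ → Prop
  | nil (p : σ) : IsPath E p [] p
  | cons {p q : σ} {e : σ × List ℕ × α × σ} {l : List (σ × List ℕ × α × σ)} :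
      e ∈ E → e.1 = p → IsPath E e.2.2.2 l q → IsPath E p (e :: l) q

def pathWord (l : List (σ × List ℕ × α × σ)) : List ℕ := l.flatMap (·.2.1)

def pathValue [Monoid α] (l : List (σ × List ℕ × α × σ)) : α := (l.map (·.2.2.1)).prod

@[simp] theorem pathWord_nil : pathWord ([] : List (σ × List ℕ × α × σ)) = [] := rfl

@[simp] theorem pathWord_cons (e : σ × List ℕ × α × σ) (l : List (σ × List ℕ × α × σ)) :
    pathWord (e :: l) = e.2.1 ++ pathWord l := rfl

@[simp] theorem pathWord_append (l₁ l₂ : List (σ × List ℕ × α × σ)) :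
    pathWord (l₁ ++ l₂) = pathWord l₁ ++ pathWord l₂ := List.flatMap_append

@[simp] theorem pathValue_nil [Monoid α] : pathValue ([] : List (σ × List ℕ × α × σ)) = 1 := rfl

@[simp] theorem pathValue_cons [Monoid α] (e : σ × List ℕ × α × σ) (l : List (σ × List ℕ × α × σ)) :
    pathValue (e :: l) = e.2.2.1 * pathValue l := List.prod_cons

@[simp] theorem pathValue_append [Monoid α] (l₁ l₂ : List (σ × List ℕ × α × σ)) :
    pathValue (l₁ ++ l₂) = pathValue l₁ * pathValue l₂ := by
  simp [pathValue]

namespace IsPath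

variable {E E' : List (σ × List ℕ × α × σ)}

theorem append_iff {p r : σ} {l₁ l₂ : List (σ × List ℕ × α × σ)} :
    IsPath E p (l₁ ++ l₂) r ↔ ∃ q, IsPath E p l₁ q ∧ IsPath E q l₂ r := by
  induction l₁ generalizing p with
  | nil => exact ⟨fun h => ⟨p, nil p, h⟩, fun ⟨q, h₁, h₂⟩ => by cases h₁; exact h₂⟩
  | cons e l₁ ih =>
    constructor
    · rintro (_ | ⟨he, hp, h⟩)
      obtain ⟨q, h₁, h₂⟩ := ih.1 h
      exact ⟨q, cons he hp h₁, h₂⟩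
    · rintro ⟨q, _ | ⟨he, hp, h₁⟩, h₂⟩
      exact cons he hp (ih.2 ⟨q, h₁, h₂⟩)

theorem append {p q r : σ} {l₁ l₂ : List (σ × List ℕ × α × σ)} (h₁ : IsPath E p l₁ q)
    (h₂ : IsPath E q l₂ r) : IsPath E p (l₁ ++ l₂) r :=
  append_iff.2 ⟨q, h₁, h₂⟩

theorem singleton_iff {p q : σ} {e : σ × List ℕ × α × σ} :
    IsPath E p [e] q ↔ e ∈ E ∧ e.1 = p ∧ e.2.2.2 = q := by
  constructor
  · rintro (_ | ⟨he, hp, (_ | _)⟩)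
    exact ⟨he, hp, rfl⟩
  · rintro ⟨he, hp, rfl⟩
    exact cons he hp (nil _)

theorem mem {p q : σ} {l : List (σ × List ℕ × α × σ)} (h : IsPath E p l q) :
    ∀ e ∈ l, e ∈ E := by
  induction h with
  | nil => simp
  | cons he _ _ ih => exact List.forall_mem_cons.2 ⟨he, ih⟩

theorem mono {p q : σ} {l : List (σ × List ℕ × α × σ)} (h : IsPath E p l q) (hE : E ⊆ E') :
    IsPath E' p l q := by
  induction h with
  | nil => exact nil _
  | cons he hp _ ih => exact cons (hE he) hp ih

end IsPath

end Paths

namespace VAut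

variable {M : Type*} [Monoid M] (A : VAut M)

theorem run_iff {q : A.Q} {w : List ℕ} {m : M} :
    A.Run q w m ↔ ∃ l, IsPath A.edges A.init l q ∧ pathWord l = w ∧ pathValue l = m := by
  constructor
  · intro h
    induction h with
    | nil => exact ⟨[], .nil _, rfl, rfl⟩
    | step he _ hq ih =>
      obtain ⟨l, hl, rfl, rfl⟩ := ih
      exact ⟨l ++ [_], hl.append (IsPath.singleton_iff.2 ⟨he, hq, rfl⟩), by simp, by simp⟩
  · rintro ⟨l, hl, rfl, rfl⟩
    induction l using List.reverseRecOn generalizing q with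
    | nil => cases hl; exact .nil
    | append_singleton l e ih =>
      obtain ⟨r, hpre, hlast⟩ := IsPath.append_iff.1 hl
      obtain ⟨he, hr, rfl⟩ := IsPath.singleton_iff.1 hlast
      simpa using Run.step he (ih hpre) hr

theorem mem_lang_iff {w : List ℕ} :
    w ∈ A.lang ↔ ∃ l q, IsPath A.edges A.init l q ∧ A.final q ∧ pathWord l = w ∧
      pathValue l = 1 := by
  simp only [lang, Set.mem_ofPred_eq, run_iff]
  grind

end VAut

theorem List.prod_drop_eq_getD_mul {M : Type*} [Monoid M] (l : List M) (t : ℕ) :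
    (l.drop t).prod = l.getD t 1 * (l.drop (t + 1)).prod := by
  rcases lt_or_ge t l.length with ht | ht
  · rw [List.drop_eq_getElem_cons ht, List.prod_cons, List.getD_eq_getElem _ _ ht]
  · rw [List.drop_eq_nil_of_le ht, List.drop_eq_nil_of_le (by omega), List.getD_eq_default _ _ ht]
    simp

namespace VAut

section Subdivision

variable {M : Type*} [Monoid M] (A : VAut M) (f : Fin A.edges.length → List M)

def maxFactorLength : ℕ := Finset.univ.sup fun k => (f k).length

abbrev SubdivQ := A.Q ⊕ (Fin A.edges.length × Fin (A.maxFactorLength f + 1))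

/-- The edge `k` is replaced by a chain through the states `(k, 0), …, (k, N)`, where
`N = A.maxFactorLength f`: an entry edge reading the word of `k`, one edge for each factor of
`f k` (padded with `1`), and an exit edge. -/
def chain (k : Fin A.edges.length) : List (A.SubdivQ f × List ℕ × M × A.SubdivQ f) :=
  (.inl A.edges[k].1, A.edges[k].2.1, 1, .inr (k, 0)) ::
  (.inr (k, Fin.last _), [], 1, .inl A.edges[k].2.2.2) ::
  (List.finRange (A.maxFactorLength f)).map fun t : Fin _ =>
    (.inr (k, t.castSucc), [], (f k).getD t 1, .inr (k, t.succ))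

def subdivEdges : List (A.SubdivQ f × List ℕ × M × A.SubdivQ f) :=
  (List.finRange A.edges.length).flatMap (A.chain f)

def subdivide : VAut M where
  Q := A.SubdivQ f
  edges := A.subdivEdges f
  init := .inl A.init
  final := Sum.elim A.final fun _ => False

theorem length_le_maxFactorLength (k : Fin A.edges.length) :
    (f k).length ≤ A.maxFactorLength f :=
  Finset.le_sup (f := fun k => (f k).length) (Finset.mem_univ k)

theorem mem_subdivEdges {e : A.SubdivQ f × List ℕ × M × A.SubdivQ f} :
    e ∈ A.subdivEdges f ↔ ∃ k, e ∈ A.chain f k := by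
  simp [subdivEdges]

variable {A f}

theorem exists_isPath_subdivEdges_getElem (k : Fin A.edges.length)
    (hk : (f k).prod = A.edges[k].2.2.1) :
    ∃ l, IsPath (A.subdivEdges f) (.inl A.edges[k].1) l (.inl A.edges[k].2.2.2) ∧
      pathWord l = A.edges[k].2.1 ∧ pathValue l = A.edges[k].2.2.1 := by
  have hmem : ∀ e ∈ A.chain f k, e ∈ A.subdivEdges f :=
    fun e he => (A.mem_subdivEdges f).2 ⟨k, he⟩
  have tail : ∀ t : Fin (A.maxFactorLength f + 1), ∃ l,
      IsPath (A.subdivEdges f) (.inr (k, t)) l (.inl A.edges[k].2.2.2) ∧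
      pathWord l = [] ∧ pathValue l = ((f k).drop t).prod := by
    intro t
    induction t using Fin.reverseInduction with
    | last =>
      refine ⟨[(.inr (k, Fin.last _), [], 1, .inl A.edges[k].2.2.2)],
        IsPath.singleton_iff.2 ⟨hmem _ (by simp [chain]), rfl, rfl⟩, rfl, ?_⟩
      simp [List.drop_eq_nil_of_le (A.length_le_maxFactorLength f k)]
    | cast t ih =>
      obtain ⟨l, hl, hw, hv⟩ := ih
      refine ⟨(.inr (k, t.castSucc), [], (f k).getD t 1, .inr (k, t.succ)) :: l,
        .cons (hmem _ ?_) rfl hl, by simp [hw], ?_⟩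
      · exact List.mem_cons_of_mem _ (List.mem_cons_of_mem _ (List.mem_map.2 ⟨t, by simp, rfl⟩))
      · simp [hv, List.prod_drop_eq_getD_mul (f k) t]
  obtain ⟨l, hl, hw, hv⟩ := tail 0
  exact ⟨(.inl A.edges[k].1, A.edges[k].2.1, 1, .inr (k, 0)) :: l,
    .cons (hmem _ (by simp [chain])) rfl hl, by simp [hw], by simp [hv, hk]⟩

theorem exists_isPath_subdivEdges (hf : ∀ k, (f k).prod = A.edges[k].2.2.1) {p q : A.Q}
    {l : List (A.Q × List ℕ × M × A.Q)} (h : IsPath A.edges p l q) :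
    ∃ l', IsPath (A.subdivEdges f) (.inl p) l' (.inl q) ∧ pathWord l' = pathWord l ∧
      pathValue l' = pathValue l := by
  induction h with
  | nil => exact ⟨[], .nil _, rfl, rfl⟩
  | cons he hp _ ih =>
    obtain ⟨l', hl', hw, hv⟩ := ih
    obtain ⟨k, hk, rfl⟩ := List.mem_iff_getElem.1 he
    obtain ⟨c, hc, hcw, hcv⟩ := exists_isPath_subdivEdges_getElem ⟨k, hk⟩ (hf _)
    subst hp
    exact ⟨c ++ l', hc.append hl', by simp [hcw, hw], by simp [hcv, hv]⟩

def exitState : A.SubdivQ f → A.Q := Sum.elim id fun kt => A.edges[kt.1].2.2.2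

def pendingValue : A.SubdivQ f → M := Sum.elim (fun _ => 1) fun kt => ((f kt.1).drop kt.2).prod

/-- A path of the subdivision from `r` to an original state finishes the edge in progress at `r`
(contributing the factors still pending) and then follows a path of `A`. -/
theorem exists_isPath_of_isPath_subdivEdges (hf : ∀ k, (f k).prod = A.edges[k].2.2.1)
    {r r' : A.SubdivQ f} {l} {q : A.Q} (h : IsPath (A.subdivEdges f) r l r')
    (hr' : r' = .inl q) :
    ∃ l₀, IsPath A.edges (exitState r) l₀ q ∧ pathWord l₀ = pathWord l ∧
      pathValue l = pendingValue r * pathValue l₀ := by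
  induction h with
  | nil => subst hr'; exact ⟨[], .nil _, rfl, by simp [pendingValue]⟩
  | cons he hp _ ih =>
    subst hp
    obtain ⟨l₀, hl₀, hw, hv⟩ := ih hr'
    obtain ⟨k, he⟩ := (A.mem_subdivEdges f).1 he
    simp only [chain, List.mem_cons, List.mem_map, List.mem_finRange, true_and] at he
    rcases he with rfl | rfl | ⟨t, rfl⟩
    · refine ⟨A.edges[k] :: l₀, .cons (List.getElem_mem _) rfl hl₀, by simp [hw], ?_⟩
      simp_all [exitState, pendingValue]
    · refine ⟨l₀, hl₀, by simpa using hw, ?_⟩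
      simp_all [exitState, pendingValue, List.drop_eq_nil_of_le (A.length_le_maxFactorLength f k)]
    · refine ⟨l₀, hl₀, by simpa using hw, ?_⟩
      simp_all [exitState, pendingValue, List.prod_drop_eq_getD_mul (f k) t, mul_assoc]

theorem lang_subdivide (hf : ∀ k, (f k).prod = A.edges[k].2.2.1) :
    (A.subdivide f).lang = A.lang := by
  ext w
  simp only [mem_lang_iff]
  constructor
  · rintro ⟨l, q | _, hl, hq, rfl, hv⟩
    · obtain ⟨l₀, hl₀, hw, hv₀⟩ := exists_isPath_of_isPath_subdivEdges hf hl rfl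
      exact ⟨l₀, q, hl₀, hq, hw, by
        simpa [subdivide, pendingValue] using hv₀.symm.trans hv⟩
    · exact hq.elim
  · rintro ⟨l, q, hl, hq, rfl, hv⟩
    obtain ⟨l', hl', hw, hv'⟩ := exists_isPath_subdivEdges hf hl
    exact ⟨l', .inl q, hl', hq, hw, hv'.trans hv⟩

theorem label_mem_of_mem_subdivEdges {e : A.SubdivQ f × List ℕ × M × A.SubdivQ f}
    (he : e ∈ A.subdivEdges f) : e.2.2.1 = 1 ∨ ∃ k, e.2.2.1 ∈ f k := by
  obtain ⟨k, he⟩ := (A.mem_subdivEdges f).1 he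
  simp only [chain, List.mem_cons, List.mem_map, List.mem_finRange, true_and] at he
  rcases he with rfl | rfl | ⟨t, rfl⟩
  · exact .inl rfl
  · exact .inl rfl
  · rcases lt_or_ge (t : ℕ) (f k).length with ht | ht
    · exact .inr ⟨k, List.getD_eq_getElem _ _ ht ▸ List.getElem_mem ht⟩
    · exact .inl (List.getD_eq_default _ _ ht)

end Subdivision

theorem exists_lang_eq_of_closure_eq_top {M : Type*} [Monoid M] (A : VAut M) {S : Set M}
    (hS : Submonoid.closure S = ⊤) :
    ∃ A' : VAut M, (∀ e ∈ A'.edges, e.2.2.1 = 1 ∨ e.2.2.1 ∈ S) ∧ A'.lang = A.lang := by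
  choose f hfS hf using fun k : Fin A.edges.length =>
    Submonoid.exists_list_of_mem_closure (s := S) (hS ▸ Submonoid.mem_top A.edges[k].2.2.1)
  refine ⟨A.subdivide f, fun e he => ?_, lang_subdivide hf⟩
  obtain h | ⟨k, hk⟩ := label_mem_of_mem_subdivEdges he
  · exact .inl h
  · exact .inr (hfS k _ hk)

end VAut

universe u

theorem List.IsChain.iff_of_mem {α : Type*} {P : α → Prop} {l : List α}
    (h : l.IsChain fun a b => (P a ↔ P b)) : ∀ a ∈ l, ∀ b ∈ l, (P a ↔ P b) :=
  @List.Pairwise.forall_of_forall _ (fun a b => (P a ↔ P b)) _ ⟨fun _ _ => Iff.symm⟩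
    (fun _ _ => Iff.rfl) (@List.IsChain.pairwise _ _ _ ⟨Iff.trans⟩ h)

namespace Monoid.Coprod

open MonoidHom

variable {M₀ M₁ : Type u} [Monoid M₀] [Monoid M₁]

theorem eq_one_of_mem_mrange_inl_of_mem_mrange_inr {m : M₀ ∗ M₁} (h₀ : m ∈ mrange inl)
    (h₁ : m ∈ mrange inr) : m = 1 := by
  obtain ⟨a, rfl⟩ := h₀
  obtain ⟨b, hb⟩ := h₁
  have ha : a = 1 := by simpa using congrArg fst hb.symm
  rw [ha, map_one]

/-- The factors of `M₀ ∗ M₁` as a `Bool`-indexed family, so that the reduced words of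
`Monoid.CoprodI` can be used. -/
abbrev factor (M₀ M₁ : Type u) (b : Bool) : Type u := cond b M₁ M₀

instance : ∀ b, Monoid (factor M₀ M₁ b)
  | false => ‹Monoid M₀›
  | true => ‹Monoid M₁›

def toCoprodI : M₀ ∗ M₁ →* CoprodI (factor M₀ M₁) :=
  lift (CoprodI.of (M := factor M₀ M₁) (i := false)) (CoprodI.of (M := factor M₀ M₁) (i := true))

/-- Such a list is a reduced word of `CoprodI`, and reduced words are unique. -/
theorem eq_nil_of_isChain_of_prod_eq_one {l : List (M₀ ∗ M₁)}
    (hl : ∀ m ∈ l, m ≠ 1 ∧ (m ∈ mrange inl ∨ m ∈ mrange inr))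
    (hchain : l.IsChain fun a b => ¬(a ∈ mrange inl ↔ b ∈ mrange inl)) (h1 : l.prod = 1) :
    l = [] := by
  classical
  let letter : M₀ ∗ M₁ → Σ b, factor M₀ M₁ b := fun m =>
    if m ∈ mrange inl then ⟨false, fst m⟩ else ⟨true, snd m⟩
  have hletter : ∀ m ∈ l, toCoprodI m = CoprodI.of (letter m).2 ∧ (letter m).2 ≠ 1 := by
    intro m hm
    obtain ⟨hm1, hm⟩ := hl m hm
    by_cases h : m ∈ mrange inl
    · rw [show letter m = ⟨false, fst m⟩ from if_pos h]
      obtain ⟨a, rfl⟩ := h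
      have ha : a ≠ 1 := by rintro rfl; exact hm1 (map_one _)
      simpa [toCoprodI] using ha
    · rw [show letter m = ⟨true, snd m⟩ from if_neg h]
      obtain ⟨b, rfl⟩ := hm.resolve_left h
      have hb : b ≠ 1 := by rintro rfl; exact hm1 (map_one _)
      simpa [toCoprodI] using hb
  let w : CoprodI.Word (factor M₀ M₁) :=
    { toList := l.map letter
      ne_one := by
        simp only [List.mem_map, forall_exists_index, and_imp]
        rintro _ m hm rfl
        exact (hletter m hm).2
      chain_ne := by
        refine List.isChain_map_of_isChain _ ?_ hchain
        intro a b hab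
        by_cases ha : a ∈ mrange inl <;> by_cases hb : b ∈ mrange inl <;> simp_all [letter] }
  have hw : w.prod = 1 := by
    have : (l.map letter).map (fun p => CoprodI.of p.2) = l.map toCoprodI := by
      rw [List.map_map]
      exact List.map_congr_left fun m hm => (hletter m hm).1.symm
    simp only [CoprodI.Word.prod, w, this, ← map_list_prod, h1, map_one]
  have : w = CoprodI.Word.empty := CoprodI.Word.equiv.symm.injective hw
  simpa [w] using congrArg CoprodI.Word.toList this

open Classical in
noncomputable def sameFactor (a b : M₀ ∗ M₁) : Bool := decide (a ∈ mrange inl ↔ b ∈ mrange inl)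

theorem iff_of_mem_splitBy_sameFactor {l c : List (M₀ ∗ M₁)} (hc : c ∈ l.splitBy sameFactor) :
    ∀ m ∈ c, ∀ m' ∈ c, (m ∈ mrange inl ↔ m' ∈ mrange inl) :=
  List.IsChain.iff_of_mem <| (List.isChain_of_mem_splitBy hc).imp fun _ _ h => by
    simpa [sameFactor] using h

theorem forall_mem_mrange_or_forall_mem_mrange {c : List (M₀ ∗ M₁)}
    (hc : ∀ m ∈ c, m ∈ mrange inl ∨ m ∈ mrange inr)
    (hside : ∀ m ∈ c, ∀ m' ∈ c, (m ∈ mrange inl ↔ m' ∈ mrange inl)) :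
    (∀ m ∈ c, m ∈ mrange inl) ∨ (∀ m ∈ c, m ∈ mrange inr) := by
  by_cases h : ∃ m ∈ c, m ∈ mrange inl
  · obtain ⟨m, hm, hinl⟩ := h
    exact .inl fun m' hm' => (hside m hm m' hm').1 hinl
  · push Not at h
    exact .inr fun m hm => (hc m hm).resolve_left (h m hm)

theorem prod_mem_mrange_inl_iff {c : List (M₀ ∗ M₁)}
    (hc : ∀ m ∈ c, m ∈ mrange inl ∨ m ∈ mrange inr)
    (hside : ∀ m ∈ c, ∀ m' ∈ c, (m ∈ mrange inl ↔ m' ∈ mrange inl)) (h1 : c.prod ≠ 1)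
    {m : M₀ ∗ M₁} (hm : m ∈ c) : c.prod ∈ mrange inl ↔ m ∈ mrange inl := by
  by_cases hm₀ : m ∈ mrange inl
  · exact iff_of_true (Submonoid.list_prod_mem _ fun m' hm' => (hside m hm m' hm').1 hm₀) hm₀
  · have : c.prod ∈ mrange inr := Submonoid.list_prod_mem _ fun m' hm' =>
      (hc m' hm').resolve_left fun h => hm₀ ((hside m hm m' hm').2 h)
    exact iff_of_false (fun h => h1 (eq_one_of_mem_mrange_inl_of_mem_mrange_inr h this)) hm₀

/-- Otherwise the block products would form a nonempty reduced word with product `1`. -/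
theorem exists_mem_splitBy_prod_eq_one {l : List (M₀ ∗ M₁)}
    (hl : ∀ m ∈ l, m ≠ 1 ∧ (m ∈ mrange inl ∨ m ∈ mrange inr)) (h1 : l.prod = 1) (hne : l ≠ []) :
    ∃ c ∈ l.splitBy sameFactor, c.prod = 1 := by
  by_contra! hB
  have hsyl : ∀ c ∈ l.splitBy sameFactor, ∀ m ∈ c, m ∈ mrange inl ∨ m ∈ mrange inr :=
    fun c hc m hm => (hl m (List.flatten_splitBy sameFactor l ▸ List.mem_flatten_of_mem hc hm)).2
  refine hne (List.splitBy_eq_nil.1 (List.map_eq_nil_iff.1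
    (eq_nil_of_isChain_of_prod_eq_one (l := (l.splitBy sameFactor).map List.prod)
      (fun m hm => ?_) ?_ ?_)))
  · obtain ⟨c, hc, rfl⟩ := List.mem_map.1 hm
    refine ⟨hB c hc, ?_⟩
    rcases forall_mem_mrange_or_forall_mem_mrange (hsyl c hc)
      (iff_of_mem_splitBy_sameFactor hc) with h | h
    · exact .inl (Submonoid.list_prod_mem _ h)
    · exact .inr (Submonoid.list_prod_mem _ h)
  · rw [List.isChain_map]
    refine (List.isChain_getLast_head_splitBy _ _).imp_of_mem_imp fun a b ha hb h => ?_
    obtain ⟨ha', hb', h⟩ := h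
    rw [prod_mem_mrange_inl_iff (hsyl a ha) (iff_of_mem_splitBy_sameFactor ha) (hB a ha)
        (List.getLast_mem ha'),
      prod_mem_mrange_inl_iff (hsyl b hb) (iff_of_mem_splitBy_sameFactor hb) (hB b hb)
        (List.head_mem hb')]
    simpa [sameFactor] using h
  · rw [← List.prod_flatten (l := l.splitBy sameFactor), List.flatten_splitBy, h1]

theorem exists_infix_prod_eq_one {l : List (M₀ ∗ M₁)}
    (hl : ∀ m ∈ l, m ∈ mrange inl ∨ m ∈ mrange inr) (h1 : l.prod = 1) (hne : ∃ m ∈ l, m ≠ 1) :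
    ∃ x B y, l = x ++ B ++ y ∧ ((∀ m ∈ B, m ∈ mrange inl) ∨ (∀ m ∈ B, m ∈ mrange inr)) ∧
      B.prod = 1 ∧ ∃ m ∈ B, m ≠ 1 := by
  classical
  have mem_filter : ∀ {l' : List (M₀ ∗ M₁)} {m}, m ∈ l'.filter (· != 1) ↔ m ∈ l' ∧ m ≠ 1 := by
    simp
  obtain ⟨m, hm, hm1⟩ := hne
  obtain ⟨c, hc, hc1⟩ := exists_mem_splitBy_prod_eq_one
    (fun m hm => ⟨(mem_filter.1 hm).2, hl m (mem_filter.1 hm).1⟩)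
    ((List.prod_filter_bne_one l).trans h1) (List.ne_nil_of_mem (mem_filter.2 ⟨hm, hm1⟩))
  have hcl : ∀ m ∈ c, m ∈ l ∧ m ≠ 1 := fun m hm =>
    mem_filter.1 (List.flatten_splitBy sameFactor (l.filter (· != 1)) ▸
      List.mem_flatten_of_mem hc hm)
  obtain ⟨pre, post, hsplit⟩ := List.append_of_mem hc
  have hfilter : l.filter (· != 1) = pre.flatten ++ c ++ post.flatten := by
    rw [← List.flatten_splitBy sameFactor (l.filter (· != 1)), hsplit]; simp
  obtain ⟨xB, y, rfl, hxB, -⟩ := List.filter_eq_append_iff.1 hfilter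
  obtain ⟨x, B, rfl, -, hB⟩ := List.filter_eq_append_iff.1 hxB
  obtain ⟨m₀, hm₀⟩ := List.exists_mem_of_ne_nil c (List.ne_nil_of_mem_splitBy hc)
  have hBc : ∀ m ∈ B, m = 1 ∨ m ∈ c := fun m hm => by
    by_cases h1 : m = 1
    · exact .inl h1
    · exact .inr (hB ▸ mem_filter.2 ⟨hm, h1⟩)
  refine ⟨x, B, y, rfl, ?_, by rw [← List.prod_filter_bne_one, hB, hc1],
    m₀, (mem_filter.1 (hB ▸ hm₀)).1, (hcl m₀ hm₀).2⟩
  rcases forall_mem_mrange_or_forall_mem_mrange (fun m hm => hl m (hcl m hm).1)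
    (iff_of_mem_splitBy_sameFactor hc) with h | h
  · exact .inl fun m hm => (hBc m hm).elim (· ▸ one_mem _) (h m)
  · exact .inr fun m hm => (hBc m hm).elim (· ▸ one_mem _) (h m)

end Monoid.Coprod

namespace CGram

variable (G : CGram)

theorem step_append {u v : List ℕ} (h : G.step u v) (x z : List ℕ) :
    G.step (x ++ u ++ z) (x ++ v ++ z) := by
  obtain ⟨x', z', w, p, hp, hw, rfl, rfl⟩ := h
  exact ⟨x ++ x', z' ++ z, w, p, hp, hw, by simp, by simp⟩

theorem step_of_mem_prods {a : ℕ} {L : Lang} {γ : List ℕ} (hp : (a, L) ∈ G.prods) (hγ : γ ∈ L) :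
    G.step [a] γ :=
  ⟨[], [], γ, (a, L), hp, hγ, rfl, by simp⟩

theorem mem_of_mem_lang (s : ℕ → Language ℕ) (hs : ∀ a ∉ G.NT, [a] ∈ s a)
    (hG : ∀ p ∈ G.prods, ∀ γ ∈ p.2, (γ.map s).prod ≤ s p.1) {w : List ℕ} (hw : w ∈ G.lang) :
    w ∈ s G.start := by
  obtain ⟨hd, hterm⟩ := hw
  have hself : ∀ u : List ℕ, (∀ a ∈ u, a ∉ G.NT) → u ∈ (u.map s).prod := by
    intro u hu
    induction u with
    | nil => exact Language.nil_mem_one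
    | cons a u ih =>
      simp only [List.forall_mem_cons] at hu
      exact Language.append_mem_mul (hs a hu.1) (ih hu.2)
  have key : ∀ α, Relation.ReflTransGen G.step α w → w ∈ (α.map s).prod := by
    intro α h
    induction h using Relation.ReflTransGen.head_induction_on with
    | refl => exact hself w hterm
    | head hstep _ ih =>
      obtain ⟨x, z, γ, p, hp, hγ, rfl, rfl⟩ := hstep
      simp only [List.map_append, List.prod_append, List.map_cons, List.map_nil,
        List.prod_cons, List.prod_nil, mul_one] at ih ⊢
      exact mul_le_mul_left (mul_le_mul_right (hG p hp γ hγ) _) _ ih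
  simpa using key _ hd

end CGram

section Pullback

variable {σ M M' : Type*} [Monoid M] [Monoid M'] (ι : M' →* M)

def relabel (e : σ × List ℕ × M' × σ) : σ × List ℕ × M × σ := (e.1, e.2.1, ι e.2.2.1, e.2.2.2)

/-- The edges of `E` whose label lies in the range of `ι`, labelled by their `ι`-preimage. -/
noncomputable def pullback (E : List (σ × List ℕ × M × σ)) : List (σ × List ℕ × M' × σ) :=
  E.filterMap fun e => (Function.partialInv ι e.2.2.1).map fun a => (e.1, e.2.1, a, e.2.2.2)

variable {ι}

theorem mem_pullback (hι : Function.Injective ι) {E : List (σ × List ℕ × M × σ)}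
    {e : σ × List ℕ × M' × σ} : e ∈ pullback ι E ↔ relabel ι e ∈ E := by
  simp only [pullback, List.mem_filterMap, Option.map_eq_some_iff]
  constructor
  · rintro ⟨e', he', a, ha, rfl⟩
    rwa [relabel, hι.isPartialInv _ _ |>.1 ha]
  · intro he
    exact ⟨_, he, e.2.2.1, Function.partialInv_left hι _, rfl⟩

theorem isPath_pullback_iff (hι : Function.Injective ι) {E : List (σ × List ℕ × M × σ)} {p q : σ}
    {l : List (σ × List ℕ × M' × σ)} :
    IsPath (pullback ι E) p l q ↔ IsPath E p (l.map (relabel ι)) q := by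
  induction l generalizing p with
  | nil => exact ⟨fun h => by cases h; exact .nil _, fun h => by cases h; exact .nil _⟩
  | cons e l ih =>
    constructor
    · rintro (_ | ⟨he, rfl, h⟩)
      exact .cons ((mem_pullback hι).1 he) rfl (ih.1 h)
    · rintro (_ | ⟨he, hp, h⟩)
      exact .cons ((mem_pullback hι).2 he) hp (ih.2 h)

@[simp] theorem pathWord_map_relabel (l : List (σ × List ℕ × M' × σ)) :
    pathWord (l.map (relabel ι)) = pathWord l := by
  simp [pathWord, relabel, List.flatMap_map]

@[simp] theorem pathValue_map_relabel (l : List (σ × List ℕ × M' × σ)) :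
    pathValue (l.map (relabel ι)) = ι (pathValue l) := by
  simp [pathValue, relabel, map_list_prod, Function.comp_def]

theorem exists_map_relabel_eq {l : List (σ × List ℕ × M × σ)}
    (hl : ∀ e ∈ l, e.2.2.1 ∈ MonoidHom.mrange ι) :
    ∃ l' : List (σ × List ℕ × M' × σ), l'.map (relabel ι) = l := by
  induction l with
  | nil => exact ⟨[], rfl⟩
  | cons e l ih =>
    obtain ⟨a, ha⟩ := hl e List.mem_cons_self
    obtain ⟨l', hl'⟩ := ih fun e he => hl e (List.mem_cons_of_mem _ he)
    exact ⟨(e.1, e.2.1, a, e.2.2.2) :: l', by simp [relabel, ha, hl']⟩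

end Pullback

namespace VAut

variable {M : Type*} [Monoid M] (A : VAut M)

def letterBound : ℕ := (A.edges.flatMap (·.2.1)).sum + 1

theorem lt_letterBound {e : A.Q × List ℕ × M × A.Q} (he : e ∈ A.edges) {a : ℕ} (ha : a ∈ e.2.1) :
    a < A.letterBound :=
  Nat.lt_succ_of_le (List.le_sum_of_mem (List.mem_flatMap.2 ⟨e, he, ha⟩))

/-- The nonterminal `some (p, q)` is to derive the words read from `p` to `q` with value `1`, and
`none`, the start symbol, the words accepted by `A`. -/
noncomputable def nonterminal (o : Option (A.Q × A.Q)) : ℕ := A.letterBound + Fintype.equivFin _ o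

theorem nonterminal_injective : Function.Injective A.nonterminal := fun o o' h =>
  (Fintype.equivFin _).injective (Fin.ext (by simpa [nonterminal] using h))

theorem letterBound_le_nonterminal (o : Option (A.Q × A.Q)) : A.letterBound ≤ A.nonterminal o :=
  Nat.le_add_right _ _

abbrev between (o : Option (A.Q × A.Q)) : VAut M :=
  { A with init := o.elim A.init Prod.fst, final := o.elim A.final fun x q => q = x.2 }

noncomputable def jump (x : A.Q × A.Q) : A.Q × List ℕ × M × A.Q :=
  (x.1, [A.nonterminal (some x)], 1, x.2)

noncomputable def jumps : List (A.Q × List ℕ × M × A.Q) := Finset.univ.toList.map A.jump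

theorem jump_mem_jumps (x : A.Q × A.Q) : A.jump x ∈ A.jumps :=
  List.mem_map.2 ⟨x, Finset.mem_toList.2 (Finset.mem_univ x), rfl⟩

noncomputable def expansion (a : ℕ) : Language ℕ :=
  {w | (a ∉ Set.range A.nonterminal ∧ w = [a]) ∨
    ∃ o, a = A.nonterminal o ∧ w ∈ (A.between o).lang}

theorem eq_of_mem_expansion {a : ℕ} (ha : a < A.letterBound) {w : List ℕ}
    (hw : w ∈ A.expansion a) : w = [a] := by
  rcases hw with ⟨-, rfl⟩ | ⟨o, rfl, -⟩
  · rfl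
  · exact absurd ha (not_lt.2 (A.letterBound_le_nonterminal o))

theorem mem_expansion_nonterminal {o : Option (A.Q × A.Q)} {w : List ℕ} :
    w ∈ A.expansion (A.nonterminal o) ↔ w ∈ (A.between o).lang := by
  constructor
  · rintro (⟨h, -⟩ | ⟨o', h, hw⟩)
    · exact absurd ⟨o, rfl⟩ h
    · rwa [A.nonterminal_injective h]
  · exact fun hw => .inr ⟨o, rfl, hw⟩

theorem eq_of_mem_prod_map_expansion {u : List ℕ} (hu : ∀ a ∈ u, a < A.letterBound) {w : List ℕ}
    (hw : w ∈ (u.map A.expansion).prod) : w = u := by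
  induction u generalizing w with
  | nil => exact hw
  | cons a u ih =>
    simp only [List.forall_mem_cons] at hu
    simp only [List.map_cons, List.prod_cons] at hw
    obtain ⟨v, hv, v', hv', rfl⟩ := Language.mem_mul.1 hw
    rw [A.eq_of_mem_expansion hu.1 hv, ih hu.2 hv', List.singleton_append]

theorem exists_isPath_of_mem_prod_map_expansion {p q : A.Q} {l : List (A.Q × List ℕ × M × A.Q)}
    (h : IsPath (A.edges ++ A.jumps) p l q) {w : List ℕ}
    (hw : w ∈ ((pathWord l).map A.expansion).prod) :
    ∃ l₀, IsPath A.edges p l₀ q ∧ pathWord l₀ = w ∧ pathValue l₀ = pathValue l := by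
  induction h generalizing w with
  | nil => exact ⟨[], .nil _, hw.symm, rfl⟩
  | @cons _ _ e _ he hp _ ih =>
    subst hp
    rw [pathWord_cons, List.map_append, List.prod_append] at hw
    obtain ⟨u, hu, v, hv, rfl⟩ := Language.mem_mul.1 hw
    obtain ⟨l₀, hl₀, rfl, hv₀⟩ := ih hv
    rcases List.mem_append.1 he with he | he
    · obtain rfl := A.eq_of_mem_prod_map_expansion (fun a ha => A.lt_letterBound he ha) hu
      exact ⟨e :: l₀, .cons he rfl hl₀, rfl, by simp [hv₀]⟩
    · obtain ⟨x, -, rfl⟩ := List.mem_map.1 he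
      have hu : u ∈ (A.between (some x)).lang :=
        A.mem_expansion_nonterminal.1 (by simpa [jump] using hu)
      obtain ⟨lu, _, hlu, rfl, rfl, hvu⟩ := (A.between (some x)).mem_lang_iff.1 hu
      exact ⟨lu ++ l₀, IsPath.append hlu hl₀, by simp, by simp [hvu, hv₀, jump]⟩

variable {M' : Type*} [Monoid M'] {ι : M' →* M}

variable (ι) in
/-- The right-hand side of a production of `A.nonterminal o`. -/
noncomputable abbrev sideAut (o : Option (A.Q × A.Q)) : VAut M' where
  Q := A.Q
  edges := pullback ι (A.edges ++ A.jumps)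
  init := (A.between o).init
  final := (A.between o).final

theorem prod_map_expansion_le (hι : Function.Injective ι) {o : Option (A.Q × A.Q)} {γ : List ℕ}
    (hγ : γ ∈ (A.sideAut ι o).lang) :
    (γ.map A.expansion).prod ≤ A.expansion (A.nonterminal o) := by
  intro w (hw : w ∈ (γ.map A.expansion).prod)
  obtain ⟨l, q, hl, hq, rfl, hv⟩ := (A.sideAut ι o).mem_lang_iff.1 hγ
  obtain ⟨l₀, hl₀, rfl, hv₀⟩ := A.exists_isPath_of_mem_prod_map_expansion
    ((isPath_pullback_iff hι).1 hl) (by simpa using hw)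
  exact A.mem_expansion_nonterminal.2
    ((A.between o).mem_lang_iff.2 ⟨l₀, q, hl₀, hq, rfl, by simp [hv₀, hv]⟩)

theorem pathWord_mem_sideAut_lang (hι : Function.Injective ι) {o : Option (A.Q × A.Q)} {q : A.Q}
    {l : List (A.Q × List ℕ × M × A.Q)} (h : IsPath (A.edges ++ A.jumps) (A.between o).init l q)
    (hq : (A.between o).final q) (hl : ∀ e ∈ l, e.2.2.1 ∈ MonoidHom.mrange ι)
    (hv : pathValue l = 1) : pathWord l ∈ (A.sideAut ι o).lang := by
  obtain ⟨l', rfl⟩ := exists_map_relabel_eq hl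
  refine (A.sideAut ι o).mem_lang_iff.2 ⟨l', q, (isPath_pullback_iff hι).2 h, hq, by simp, ?_⟩
  exact hι (by simpa using hv)

end VAut

open Monoid.Coprod
open MonoidHom (mrange)

theorem exists_infix_pathValue_eq_one {σ : Type*} {M₀ M₁ : Type u} [Monoid M₀] [Monoid M₁]
    {l : List (σ × List ℕ × (M₀ ∗ M₁) × σ)}
    (hl : ∀ e ∈ l, e.2.2.1 ∈ mrange inl ∨ e.2.2.1 ∈ mrange inr) (hv : pathValue l = 1)
    (hne : ∃ e ∈ l, e.2.2.1 ≠ 1) :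
    ∃ x B y, l = x ++ B ++ y ∧
      ((∀ e ∈ B, e.2.2.1 ∈ mrange inl) ∨ (∀ e ∈ B, e.2.2.1 ∈ mrange inr)) ∧
      pathValue B = 1 ∧ ∃ e ∈ B, e.2.2.1 ≠ 1 := by
  obtain ⟨e, he, he1⟩ := hne
  have hv : (l.map (·.2.2.1)).prod = 1 := hv
  obtain ⟨x', B', y', hsplit, hside, hB1, m, hm, hm1⟩ := exists_infix_prod_eq_one
    (by simpa only [List.forall_mem_map] using hl) hv ⟨_, List.mem_map_of_mem he, he1⟩
  obtain ⟨xB, y, rfl, hxB, rfl⟩ := List.map_eq_append_iff.1 hsplit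
  obtain ⟨x, B, rfl, rfl, rfl⟩ := List.map_eq_append_iff.1 hxB
  obtain ⟨e, he, rfl⟩ := List.mem_map.1 hm
  exact ⟨x, B, y, rfl, by simpa only [List.forall_mem_map] using hside, hB1, e, he, hm1⟩

namespace VAut

variable {M₀ M₁ : Type u} [Monoid M₀] [Monoid M₁] (A : VAut (M₀ ∗ M₁))

noncomputable def grammar : CGram where
  NT := Finset.univ.image A.nonterminal
  start := A.nonterminal none
  startMem := Finset.mem_image_of_mem _ (Finset.mem_univ _)
  prods := Finset.univ.toList.flatMap fun o =>
    [(A.nonterminal o, (A.sideAut inl o).lang), (A.nonterminal o, (A.sideAut inr o).lang)]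
  lhsMem := by
    intro p hp
    obtain ⟨o, -, hp⟩ := List.mem_flatMap.1 hp
    obtain rfl | rfl : p = _ ∨ p = _ := by simpa using hp
    all_goals exact Finset.mem_image_of_mem _ (Finset.mem_univ o)

theorem mem_grammar_prods {p : ℕ × Lang} : p ∈ A.grammar.prods ↔
    ∃ o, p = (A.nonterminal o, (A.sideAut inl o).lang) ∨
      p = (A.nonterminal o, (A.sideAut inr o).lang) := by
  simp [grammar, List.mem_flatMap]

theorem grammar_prods_mem {p : ℕ × Lang} (hp : p ∈ A.grammar.prods) : p.2 ∈ VA M₀ ∪ VA M₁ := by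
  obtain ⟨o, rfl | rfl⟩ := A.mem_grammar_prods.1 hp
  · exact .inl ⟨_, rfl⟩
  · exact .inr ⟨_, rfl⟩

theorem grammar_lang_subset : A.grammar.lang ⊆ A.lang := by
  intro w hw
  refine A.mem_expansion_nonterminal.1 (A.grammar.mem_of_mem_lang A.expansion ?_ ?_ hw)
  · intro a ha
    refine .inl ⟨?_, rfl⟩
    rintro ⟨o, rfl⟩
    exact ha (Finset.mem_image_of_mem _ (Finset.mem_univ o))
  · intro p hp γ hγ
    obtain ⟨o, rfl | rfl⟩ := A.mem_grammar_prods.1 hp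
    · exact A.prod_map_expansion_le inl_injective hγ
    · exact A.prod_map_expansion_le inr_injective hγ

theorem grammar_step_of_isPath {o : Option (A.Q × A.Q)} {q : A.Q}
    {l : List (A.Q × List ℕ × (M₀ ∗ M₁) × A.Q)}
    (h : IsPath (A.edges ++ A.jumps) (A.between o).init l q) (hq : (A.between o).final q)
    (hv : pathValue l = 1)
    (hl : (∀ e ∈ l, e.2.2.1 ∈ mrange inl) ∨ (∀ e ∈ l, e.2.2.1 ∈ mrange inr)) :
    A.grammar.step [A.nonterminal o] (pathWord l) := by
  rcases hl with hl | hl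
  · exact A.grammar.step_of_mem_prods (A.mem_grammar_prods.2 ⟨o, .inl rfl⟩)
      (A.pathWord_mem_sideAut_lang inl_injective h hq hl hv)
  · exact A.grammar.step_of_mem_prods (A.mem_grammar_prods.2 ⟨o, .inr rfl⟩)
      (A.pathWord_mem_sideAut_lang inr_injective h hq hl hv)

variable {A}

theorem derives_pathWord (hA : ∀ e ∈ A.edges, e.2.2.1 ∈ mrange inl ∨ e.2.2.1 ∈ mrange inr)
    {p q : A.Q} {l : List (A.Q × List ℕ × (M₀ ∗ M₁) × A.Q)}
    (h : IsPath (A.edges ++ A.jumps) p l q) (hv : pathValue l = 1) :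
    Relation.ReflTransGen A.grammar.step [A.nonterminal (some (p, q))] (pathWord l) := by
  classical
  induction hn : l.countP (fun e => decide (e.2.2.1 ≠ 1)) using Nat.strong_induction_on
    generalizing l p q with
  | _ n ih =>
  by_cases hne : ∃ e ∈ l, e.2.2.1 ≠ 1
  · have hsyl : ∀ e ∈ l, e.2.2.1 ∈ mrange inl ∨ e.2.2.1 ∈ mrange inr := fun e he => by
      rcases List.mem_append.1 (h.mem e he) with he | he
      · exact hA e he
      · obtain ⟨x, -, rfl⟩ := List.mem_map.1 he
        exact .inl (one_mem _)
    obtain ⟨x, B, y, rfl, hside, hvB, hB1⟩ := exists_infix_pathValue_eq_one hsyl hv hne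
    obtain ⟨r, hx, hBy⟩ := IsPath.append_iff.1 (List.append_assoc _ _ _ ▸ h)
    obtain ⟨r', hB, hy⟩ := IsPath.append_iff.1 hBy
    have hjump : IsPath (A.edges ++ A.jumps) p (x ++ A.jump (r, r') :: y) q :=
      hx.append (.cons (List.mem_append_right _ (A.jump_mem_jumps _)) rfl hy)
    have hv' : pathValue (x ++ A.jump (r, r') :: y) = 1 := by
      simpa [hvB, jump] using hv
    have hcount : (x ++ A.jump (r, r') :: y).countP (fun e => decide (e.2.2.1 ≠ 1)) < n := by
      have : 0 < B.countP (fun e => decide (e.2.2.1 ≠ 1)) := by simpa using hB1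
      subst hn
      simp only [List.countP_append, List.countP_cons, jump, ne_eq, not_true_eq_false,
        decide_false, Bool.false_eq_true, if_false] at this ⊢
      omega
    refine (ih _ hcount hjump hv' rfl).tail ?_
    simpa [jump] using A.grammar.step_append
      (A.grammar_step_of_isPath (o := some (r, r')) hB rfl hvB hside) (pathWord x) (pathWord y)
  · push Not at hne
    exact .single (A.grammar_step_of_isPath (o := some (p, q)) h rfl hv
      (.inl fun e he => hne e he ▸ one_mem _))

theorem lang_subset_grammar_lang
    (hA : ∀ e ∈ A.edges, e.2.2.1 ∈ mrange inl ∨ e.2.2.1 ∈ mrange inr) :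
    A.lang ⊆ A.grammar.lang := by
  intro w hw
  obtain ⟨l, q, hl, hq, rfl, hv⟩ := A.mem_lang_iff.1 hw
  refine ⟨.head ?_ (derives_pathWord hA (hl.mono (List.subset_append_left _ _)) hv), ?_⟩
  · have hjump : IsPath (A.edges ++ A.jumps) A.init [A.jump (A.init, q)] q :=
      IsPath.singleton_iff.2 ⟨List.mem_append_right _ (A.jump_mem_jumps _), rfl, rfl⟩
    have hstart : A.grammar.step [A.nonterminal none] [A.nonterminal (some (A.init, q))] := by
      simpa [jump] using A.grammar_step_of_isPath (o := none) hjump hq (by simp [jump])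
        (.inl fun e he => by simp_all [jump])
    exact hstart
  · intro a ha hNT
    obtain ⟨o, -, rfl⟩ := Finset.mem_image.1 hNT
    obtain ⟨e, he, ha⟩ := List.mem_flatMap.1 ha
    exact (A.letterBound_le_nonterminal o).not_gt (A.lt_letterBound (hl.mem e he) ha)

theorem grammar_lang (hA : ∀ e ∈ A.edges, e.2.2.1 ∈ mrange inl ∨ e.2.2.1 ∈ mrange inr) :
    A.grammar.lang = A.lang :=
  (A.grammar_lang_subset).antisymm (lang_subset_grammar_lang hA)

end VAut

/-- For any monoids `M₀`, `M₁`, the languages of valence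
automata over the free product `M₀ ∗ M₁` are contained in the algebraic
extension of `VA(M₀) ∪ VA(M₁)`. -/
theorem va_coprod_subset_alg (M₀ M₁ : Type) [Monoid M₀] [Monoid M₁] :
    VA (Monoid.Coprod M₀ M₁) ⊆ Alg (VA M₀ ∪ VA M₁) := by
  rintro L ⟨A, rfl⟩
  obtain ⟨A', hA', hlang⟩ := A.exists_lang_eq_of_closure_eq_top mclosure_range_inl_union_inr
  have hsyl : ∀ e ∈ A'.edges, e.2.2.1 ∈ mrange inl ∨ e.2.2.1 ∈ mrange inr := fun e he =>
    (hA' e he).elim (fun h => .inl (h ▸ one_mem _)) id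
  exact ⟨A'.grammar, fun _ => A'.grammar_prods_mem, by rw [A'.grammar_lang hsyl, hlang]⟩
end

section
/- For every context-free grammar G in Chomsky normal form and every nonterminal A and indices 0 ≤ i ≤ ℓ, the language generated from A^[i] in the annotated grammar G^[ℓ] equals the index-(i+1) approximation language of A in G: L(G^[ℓ], A^[i]) = L_{i+1}(G, A). -/
/-- A context-free grammar in Chomsky normal form with nonterminals `N` and
terminals `T`: binary productions `A → BC` and terminal productions `A → w`
with `w ∈ T ∪ {ε}` (`w : Option T`). -/
structure CNFGram (N T : Type) where
  bin : N → N → N → Prop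
  term : N → Option T → Prop

/-- Number of nonterminal occurrences in a sentential form. -/
def countN {N T : Type} (w : List (N ⊕ T)) : ℕ := (w.filter Sum.isLeft).length

/-- One derivation step of a CNF grammar. -/
inductive CNFStep {N T : Type} (G : CNFGram N T) :
    List (N ⊕ T) → List (N ⊕ T) → Prop
  | bin {x z : List (N ⊕ T)} {A B C : N} (h : G.bin A B C) :
      CNFStep G (x ++ [Sum.inl A] ++ z) (x ++ [Sum.inl B, Sum.inl C] ++ z)
  | term {x z : List (N ⊕ T)} {A : N} {t : Option T} (h : G.term A t) :
      CNFStep G (x ++ [Sum.inl A] ++ z) (x ++ (t.toList.map Sum.inr) ++ z)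

/-- Index-`k` restricted derivation step: both sentential forms contain at most
`k` nonterminal occurrences. -/
def CNFStepK {N T : Type} (G : CNFGram N T) (k : ℕ)
    (u v : List (N ⊕ T)) : Prop :=
  CNFStep G u v ∧ countN u ≤ k ∧ countN v ≤ k

/-- `L(G, A)`: terminal words derivable from the nonterminal `A`. -/
def CNFLangFrom {N T : Type} (G : CNFGram N T) (A : N) : Set (List T) :=
  {w | Relation.ReflTransGen (CNFStep G) [Sum.inl A] (w.map Sum.inr)}

/-- `L_k(G, A)`: terminal words derivable from `A` by index-`k` derivations. -/
def CNFLangK {N T : Type} (G : CNFGram N T) (k : ℕ) (A : N) : Set (List T) :=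
  {w | Relation.ReflTransGen (CNFStepK G k) [Sum.inl A] (w.map Sum.inr)}

/-- The annotated grammar `G^[ℓ]`: nonterminals `A^[i]` for `0 ≤ i ≤ ℓ`,
productions `A^[i] → B^[i] C^[i-1]` and `A^[i] → B^[i-1] C^[i]` for each
`A → BC` and `1 ≤ i ≤ ℓ`, and `A^[i] → w` for each terminal production
`A → w` and `0 ≤ i ≤ ℓ`. -/
def annGram {N T : Type} (G : CNFGram N T) (ℓ : ℕ) : CNFGram (N × ℕ) T where
  bin := fun p q r =>
    1 ≤ p.2 ∧ p.2 ≤ ℓ ∧ G.bin p.1 q.1 r.1 ∧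
      ((q.2 = p.2 ∧ r.2 = p.2 - 1) ∨ (q.2 = p.2 - 1 ∧ r.2 = p.2))
  term := fun p t => p.2 ≤ ℓ ∧ G.term p.1 t

/-!
Give each derivation tree its Strahler number: a leaf has number 1, and a node whose subtrees
have numbers `b` and `c` has number `b + 1` if `b = c` and `max b c` otherwise. Both languages
consist of the words with a derivation tree from `A` of Strahler number at most `i + 1`.

In `G^[ℓ]` the annotation `i` of `A^[i]` is exactly such a bound: the two binary rules are the two
ways a node of number at most `i + 1` can split. For index-bounded derivations, a tree of number
`s` is derived with index `s` by first expanding the subtree of smaller number while the other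
nonterminal waits. Conversely, reading an index-`k` derivation backwards, attach a tree to every
nonterminal of every sentential form; the invariant is that whenever `m ≥ 1` of these trees have
number at least `t`, then `t + m - 1 ≤ k`. It survives a backward step because merging two trees
of equal number `b` into one of number `b + 1` is paid for by the two trees counted at level `b`.
-/

open Relation

section SententialForms

variable {N T : Type}

@[simp]
lemma countN_nil : countN ([] : List (N ⊕ T)) = 0 := rfl

@[simp]
lemma countN_cons_inl (A : N) (α : List (N ⊕ T)) : countN (Sum.inl A :: α) = countN α + 1 := by
  simp [countN, List.filter_cons, Nat.add_comm]

@[simp]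
lemma countN_cons_inr (a : T) (α : List (N ⊕ T)) : countN (Sum.inr a :: α) = countN α := by
  simp [countN]

@[simp]
lemma countN_append (x y : List (N ⊕ T)) : countN (x ++ y) = countN x + countN y := by
  simp [countN]

@[simp]
lemma countN_map_inr (w : List T) : countN (w.map Sum.inr : List (N ⊕ T)) = 0 := by
  induction w <;> simp_all

lemma CNFStep.append_context {G : CNFGram N T} {u v : List (N ⊕ T)} (x z : List (N ⊕ T))
    (h : CNFStep G u v) : CNFStep G (x ++ u ++ z) (x ++ v ++ z) := by
  cases h with
  | @bin x₀ z₀ _ _ _ h => simpa using CNFStep.bin (x := x ++ x₀) (z := z₀ ++ z) h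
  | @term x₀ z₀ _ _ h => simpa using CNFStep.term (x := x ++ x₀) (z := z₀ ++ z) h

lemma CNFStepK.mono {G : CNFGram N T} {j k : ℕ} (hjk : j ≤ k) {u v : List (N ⊕ T)}
    (h : CNFStepK G j u v) : CNFStepK G k u v :=
  ⟨h.1, h.2.1.trans hjk, h.2.2.trans hjk⟩

lemma CNFStepK.reflTransGen_mono {G : CNFGram N T} {j k : ℕ} (hjk : j ≤ k)
    {u v : List (N ⊕ T)} (h : ReflTransGen (CNFStepK G j) u v) :
    ReflTransGen (CNFStepK G k) u v :=
  ReflTransGen.mono (fun _ _ => mono hjk) _ _ h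

lemma CNFStepK.reflTransGen_append_context {G : CNFGram N T} {j : ℕ} {u v : List (N ⊕ T)}
    (x z : List (N ⊕ T)) (h : ReflTransGen (CNFStepK G j) u v) :
    ReflTransGen (CNFStepK G (j + countN x + countN z)) (x ++ u ++ z) (x ++ v ++ z) := by
  induction h with
  | refl => exact .refl
  | tail _ hstep ih =>
    obtain ⟨hstep, hu, hv⟩ := hstep
    exact ih.tail ⟨hstep.append_context x z, by simp only [countN_append]; omega,
      by simp only [countN_append]; omega⟩

lemma exists_reflTransGen_cnfStepK {G : CNFGram N T} {u v : List (N ⊕ T)}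
    (h : ReflTransGen (CNFStep G) u v) : ∃ k, ReflTransGen (CNFStepK G k) u v := by
  induction h with
  | refl => exact ⟨0, .refl⟩
  | @tail b c _ hbc ih =>
    obtain ⟨k, hk⟩ := ih
    refine ⟨max k (max (countN b) (countN c)), ?_⟩
    exact (CNFStepK.reflTransGen_mono (le_max_left _ _) hk).tail
      ⟨hbc, le_max_of_le_right (le_max_left _ _), le_max_of_le_right (le_max_right _ _)⟩

lemma CNFStepK.reflTransGen_pair_left_first {G : CNFGram N T} {B C : N} {u v : List T}
    {b c : ℕ} (hB : ReflTransGen (CNFStepK G b) [Sum.inl B] (u.map Sum.inr))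
    (hC : ReflTransGen (CNFStepK G c) [Sum.inl C] (v.map Sum.inr)) :
    ReflTransGen (CNFStepK G (max (b + 1) c)) [Sum.inl B, Sum.inl C] ((u ++ v).map Sum.inr) := by
  have hB' := reflTransGen_append_context [] [Sum.inl C] hB
  have hC' := reflTransGen_append_context (u.map Sum.inr) [] hC
  simp only [List.nil_append, List.singleton_append, List.append_nil, countN_nil,
    countN_cons_inl, countN_map_inr, add_zero, zero_add] at hB' hC'
  rw [List.map_append]
  exact (reflTransGen_mono (le_max_left _ _) hB').trans (reflTransGen_mono (le_max_right _ _) hC')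

lemma CNFStepK.reflTransGen_pair_right_first {G : CNFGram N T} {B C : N} {u v : List T}
    {b c : ℕ} (hB : ReflTransGen (CNFStepK G b) [Sum.inl B] (u.map Sum.inr))
    (hC : ReflTransGen (CNFStepK G c) [Sum.inl C] (v.map Sum.inr)) :
    ReflTransGen (CNFStepK G (max b (c + 1))) [Sum.inl B, Sum.inl C] ((u ++ v).map Sum.inr) := by
  have hC' := reflTransGen_append_context [Sum.inl B] [] hC
  have hB' := reflTransGen_append_context [] (v.map Sum.inr) hB
  simp only [List.nil_append, List.singleton_append, List.append_nil, countN_nil,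
    countN_cons_inl, countN_map_inr, add_zero, zero_add] at hB' hC'
  rw [List.map_append]
  exact (reflTransGen_mono (le_max_right _ _) hC').trans (reflTransGen_mono (le_max_left _ _) hB')

end SententialForms

def strahlerJoin (b c : ℕ) : ℕ := if b = c then b + 1 else max b c

lemma strahlerJoin_cases (b c : ℕ) :
    b = c ∧ strahlerJoin b c = b + 1 ∨ b < c ∧ strahlerJoin b c = c ∨
      c < b ∧ strahlerJoin b c = b := by
  unfold strahlerJoin
  split_ifs with h
  · exact .inl ⟨h, rfl⟩
  · rcases Nat.lt_or_gt_of_ne h with h | h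
    · exact .inr (.inl ⟨h, max_eq_right h.le⟩)
    · exact .inr (.inr ⟨h, max_eq_left h.le⟩)

/-- Having `m ≥ 1` pending trees of Strahler number at least `t` forces `t + m - 1` simultaneous
nonterminals, so this is what an index-`k` derivation can afford. -/
def FitsIndex (k : ℕ) (M : Multiset ℕ) : Prop :=
  ∀ t, 0 < M.countP (t ≤ ·) → t + M.countP (t ≤ ·) ≤ k + 1

lemma fitsIndex_zero (k : ℕ) : FitsIndex k 0 := fun _ ht => by simp at ht

lemma FitsIndex.le_of_singleton {k s : ℕ} (h : FitsIndex k {s}) : s ≤ k := by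
  simpa [← Multiset.cons_zero, Multiset.countP_cons] using h s

lemma FitsIndex.cons_one {k : ℕ} {M : Multiset ℕ} (hcard : Multiset.card M + 1 ≤ k)
    (h : FitsIndex k M) : FitsIndex k (1 ::ₘ M) := by
  intro t ht
  have hM := h t
  have hle := Multiset.countP_le_card (t ≤ ·) M
  simp only [Multiset.countP_cons] at ht ⊢
  split_ifs at ht ⊢ <;> omega

lemma FitsIndex.join {k b c : ℕ} {M : Multiset ℕ} (h : FitsIndex k (b ::ₘ c ::ₘ M)) :
    FitsIndex k (strahlerJoin b c ::ₘ M) := by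
  intro t ht
  have ht' := h t
  have hb := h b
  have hanti : b ≤ t → M.countP (t ≤ ·) ≤ M.countP (b ≤ ·) := fun hbt => by
    simp only [Multiset.countP_eq_card_filter]
    exact Multiset.card_le_card (Multiset.monotone_filter_right M fun _ h => hbt.trans h)
  have hjoin := strahlerJoin_cases b c
  simp only [Multiset.countP_cons] at ht ht' hb ⊢
  split_ifs at ht ht' hb ⊢ <;> omega

namespace CNFGram

variable {N T : Type}

inductive StrahlerDerives (G : CNFGram N T) : ℕ → N → List T → Prop
  | leaf {A : N} {t : Option T} (h : G.term A t) : G.StrahlerDerives 1 A t.toList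
  | node {A B C : N} {b c : ℕ} {u v : List T} (h : G.bin A B C)
      (hB : G.StrahlerDerives b B u) (hC : G.StrahlerDerives c C v) :
      G.StrahlerDerives (strahlerJoin b c) A (u ++ v)

lemma StrahlerDerives.one_le {G : CNFGram N T} {s : ℕ} {A : N} {w : List T}
    (h : G.StrahlerDerives s A w) : 1 ≤ s := by
  cases h with
  | leaf => rfl
  | @node _ _ _ b c => have := strahlerJoin_cases b c; omega

lemma StrahlerDerives.reflTransGen_cnfStepK {G : CNFGram N T} {s : ℕ} {A : N} {w : List T}
    (h : G.StrahlerDerives s A w) :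
    ReflTransGen (CNFStepK G s) [Sum.inl A] (w.map Sum.inr) := by
  induction h with
  | leaf h =>
    exact .single ⟨by simpa using CNFStep.term (x := []) (z := []) h, by simp, by simp⟩
  | @node A B C b c _ _ h hB hC ihB ihC =>
    have hb := hB.one_le
    have hc := hC.one_le
    have hjoin := strahlerJoin_cases b c
    have hsplit : CNFStepK G (strahlerJoin b c) [Sum.inl A] [Sum.inl B, Sum.inl C] :=
      ⟨by simpa using CNFStep.bin (x := []) (z := []) h, by simp only [countN_cons_inl, countN_nil]; omega,
        by simp only [countN_cons_inl, countN_nil]; omega⟩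
    refine .head hsplit ?_
    rcases le_total b c with hbc | hcb
    · refine CNFStepK.reflTransGen_mono ?_ (CNFStepK.reflTransGen_pair_left_first ihB ihC)
      omega
    · refine CNFStepK.reflTransGen_mono ?_ (CNFStepK.reflTransGen_pair_right_first ihB ihC)
      omega

/-- `G.Forest α w M`: `w` splits into yields of the symbols of `α`, each nonterminal carrying a
derivation tree, and `M` is the multiset of the Strahler numbers of these trees. -/
inductive Forest (G : CNFGram N T) : List (N ⊕ T) → List T → Multiset ℕ → Prop
  | nil : G.Forest [] [] 0
  | inr {α : List (N ⊕ T)} {w : List T} {M : Multiset ℕ} (a : T) (h : G.Forest α w M) :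
      G.Forest (Sum.inr a :: α) (a :: w) M
  | inl {α : List (N ⊕ T)} {w u : List T} {M : Multiset ℕ} {A : N} {s : ℕ}
      (hA : G.StrahlerDerives s A u) (h : G.Forest α w M) :
      G.Forest (Sum.inl A :: α) (u ++ w) (s ::ₘ M)

namespace Forest

variable {G : CNFGram N T}

lemma card_eq_countN {α : List (N ⊕ T)} {w : List T} {M : Multiset ℕ} (h : G.Forest α w M) :
    Multiset.card M = countN α := by
  induction h <;> simp_all

lemma map_inr (w : List T) : G.Forest (w.map Sum.inr) w 0 := by
  induction w with
  | nil => exact nil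
  | cons a w ih => exact inr a ih

lemma append {x y : List (N ⊕ T)} {w₁ w₂ : List T} {M₁ M₂ : Multiset ℕ}
    (h₁ : G.Forest x w₁ M₁) (h₂ : G.Forest y w₂ M₂) : G.Forest (x ++ y) (w₁ ++ w₂) (M₁ + M₂) := by
  induction h₁ with
  | nil => simpa using h₂
  | inr a _ ih => exact inr a ih
  | inl hA _ ih => simpa [Multiset.cons_add] using inl hA ih

lemma exists_of_append {x y : List (N ⊕ T)} {w : List T} {M : Multiset ℕ}
    (h : G.Forest (x ++ y) w M) :
    ∃ w₁ w₂ M₁ M₂, w = w₁ ++ w₂ ∧ M = M₁ + M₂ ∧ G.Forest x w₁ M₁ ∧ G.Forest y w₂ M₂ := by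
  induction x generalizing w M with
  | nil => exact ⟨[], w, 0, M, rfl, by simp, nil, h⟩
  | cons a x ih =>
    cases h with
    | inr a h =>
      obtain ⟨w₁, w₂, M₁, M₂, rfl, rfl, hx, hy⟩ := ih h
      exact ⟨a :: w₁, w₂, M₁, M₂, rfl, rfl, inr a hx, hy⟩
    | @inl _ _ u _ _ s hA h =>
      obtain ⟨w₁, w₂, M₁, M₂, rfl, rfl, hx, hy⟩ := ih h
      exact ⟨u ++ w₁, w₂, s ::ₘ M₁, M₂, by simp, by simp [Multiset.cons_add], inl hA hx, hy⟩

lemma exists_of_map_inr_append {t : List T} {z : List (N ⊕ T)} {w : List T} {M : Multiset ℕ}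
    (h : G.Forest (t.map Sum.inr ++ z) w M) : ∃ w', w = t ++ w' ∧ G.Forest z w' M := by
  induction t generalizing w with
  | nil => exact ⟨w, rfl, h⟩
  | cons a t ih =>
    cases h with
    | inr a h =>
      obtain ⟨w', rfl, hz⟩ := ih h
      exact ⟨w', rfl, hz⟩

lemma of_bin {A B C : N} (hbin : G.bin A B C) {x z : List (N ⊕ T)} {w : List T}
    {M : Multiset ℕ} (h : G.Forest (x ++ [Sum.inl B, Sum.inl C] ++ z) w M) :
    ∃ b c M₀, M = b ::ₘ c ::ₘ M₀ ∧
      G.Forest (x ++ [Sum.inl A] ++ z) w (strahlerJoin b c ::ₘ M₀) := by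
  rw [List.append_assoc] at h
  obtain ⟨w₁, w₂, M₁, M₂, rfl, rfl, hx, hBCz⟩ := exists_of_append h
  rcases hBCz with _ | _ | @⟨_, _, _, _, _, b, hB, _ | _ | @⟨_, _, _, M₀, _, c, hC, hz⟩⟩
  refine ⟨b, c, M₁ + M₀, by simp [Multiset.add_cons], ?_⟩
  simpa [Multiset.add_cons] using hx.append (inl (.node hbin hB hC) hz)

lemma of_term {A : N} {t : Option T} (hterm : G.term A t) {x z : List (N ⊕ T)} {w : List T}
    {M : Multiset ℕ} (h : G.Forest (x ++ t.toList.map Sum.inr ++ z) w M) :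
    G.Forest (x ++ [Sum.inl A] ++ z) w (1 ::ₘ M) := by
  rw [List.append_assoc] at h
  obtain ⟨w₁, w₂, M₁, M₂, rfl, rfl, hx, htz⟩ := exists_of_append h
  obtain ⟨w', rfl, hz⟩ := exists_of_map_inr_append htz
  simpa [Multiset.add_cons] using hx.append (inl (.leaf hterm) hz)

lemma exists_of_reflTransGen_cnfStepK {k : ℕ} {α : List (N ⊕ T)} {w : List T}
    (h : ReflTransGen (CNFStepK G k) α (w.map Sum.inr)) : ∃ M, G.Forest α w M ∧ FitsIndex k M := by
  induction h using ReflTransGen.head_induction_on with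
  | refl => exact ⟨0, map_inr w, fitsIndex_zero k⟩
  | head step _ ih =>
    obtain ⟨M, hM, hfits⟩ := ih
    obtain ⟨step, hcount, -⟩ := step
    cases step with
    | bin hbin =>
      obtain ⟨b, c, M₀, rfl, hM'⟩ := of_bin hbin hM
      exact ⟨_, hM', hfits.join⟩
    | term hterm =>
      refine ⟨_, of_term hterm hM, hfits.cons_one ?_⟩
      simp only [hM.card_eq_countN, countN_append, countN_cons_inl, countN_nil,
        countN_map_inr] at hcount ⊢
      omega

end Forest

theorem mem_cnfLangK_iff {G : CNFGram N T} {k : ℕ} {A : N} {w : List T} :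
    w ∈ CNFLangK G k A ↔ ∃ s ≤ k, G.StrahlerDerives s A w := by
  constructor
  · intro hw
    obtain ⟨M, hM, hfits⟩ := Forest.exists_of_reflTransGen_cnfStepK hw
    rcases hM with _ | _ | @⟨_, _, _, _, _, s, hA, _ | _⟩
    exact ⟨s, hfits.le_of_singleton, by simpa using hA⟩
  · rintro ⟨s, hs, h⟩
    exact CNFStepK.reflTransGen_mono hs h.reflTransGen_cnfStepK

theorem mem_cnfLangFrom_iff {G : CNFGram N T} {A : N} {w : List T} :
    w ∈ CNFLangFrom G A ↔ ∃ s, G.StrahlerDerives s A w := by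
  constructor
  · intro hw
    obtain ⟨k, hk⟩ := exists_reflTransGen_cnfStepK hw
    obtain ⟨s, -, h⟩ := mem_cnfLangK_iff.1 hk
    exact ⟨s, h⟩
  · rintro ⟨s, h⟩
    exact ReflTransGen.mono (fun _ _ => And.left) _ _ h.reflTransGen_cnfStepK

lemma StrahlerDerives.of_annGram {G : CNFGram N T} {ℓ s : ℕ} {p : N × ℕ} {w : List T}
    (h : (annGram G ℓ).StrahlerDerives s p w) : ∃ s' ≤ p.2 + 1, G.StrahlerDerives s' p.1 w := by
  induction h with
  | leaf h => exact ⟨1, by omega, .leaf h.2⟩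
  | node h _ _ ihB ihC =>
    obtain ⟨hi, -, hbin, hannot⟩ := h
    obtain ⟨b, hb, hB⟩ := ihB
    obtain ⟨c, hc, hC⟩ := ihC
    have hjoin := strahlerJoin_cases b c
    exact ⟨strahlerJoin b c, by omega, .node hbin hB hC⟩

lemma StrahlerDerives.annGram {G : CNFGram N T} {ℓ s : ℕ} {A : N} {w : List T}
    (h : G.StrahlerDerives s A w) {i : ℕ} (hs : s ≤ i + 1) (hi : i ≤ ℓ) :
    ∃ s', (annGram G ℓ).StrahlerDerives s' (A, i) w := by
  induction h generalizing i with
  | leaf h => exact ⟨1, .leaf ⟨hi, h⟩⟩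
  | @node A B C b c _ _ h hB hC ihB ihC =>
    have hb := hB.one_le
    have hc := hC.one_le
    have hjoin := strahlerJoin_cases b c
    rcases le_total b c with hbc | hcb
    · obtain ⟨b', hB'⟩ := ihB (i := i - 1) (by omega) (by omega)
      obtain ⟨c', hC'⟩ := ihC (i := i) (by omega) hi
      exact ⟨_, .node (B := (B, i - 1)) (C := (C, i)) ⟨by omega, hi, h, .inr ⟨rfl, rfl⟩⟩ hB' hC'⟩
    · obtain ⟨b', hB'⟩ := ihB (i := i) (by omega) hi
      obtain ⟨c', hC'⟩ := ihC (i := i - 1) (by omega) (by omega)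
      exact ⟨_, .node (B := (B, i)) (C := (C, i - 1)) ⟨by omega, hi, h, .inl ⟨rfl, rfl⟩⟩ hB' hC'⟩

end CNFGram

/-- **Atig–Ganty.** For every CNF grammar `G`, nonterminal `A`
and indices `0 ≤ i ≤ ℓ`, the language generated from `A^[i]` in `G^[ℓ]` equals
the index-`(i+1)` approximation of the language of `A` in `G`:
`L(G^[ℓ], A^[i]) = L_{i+1}(G, A)`. -/
theorem annotated_grammar_language {N T : Type} (G : CNFGram N T)
    (ℓ i : ℕ) (hi : i ≤ ℓ) (A : N) :
    CNFLangFrom (annGram G ℓ) (A, i) = CNFLangK G (i + 1) A := by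
  ext w
  rw [CNFGram.mem_cnfLangFrom_iff, CNFGram.mem_cnfLangK_iff]
  exact ⟨fun ⟨_, h⟩ => h.of_annGram, fun ⟨_, hs, h⟩ => h.annGram hs hi⟩
end

section
/- The class of languages accepted by priority multicounter machines is closed under language substitutions: if A is a priority k-counter machine and σ assigns to each input letter x a language σ(x) accepted by a priority ℓ-counter machine, then σ(L(A)) is accepted by a priority (ℓ+k)-counter machine. -/
/-- An edge of a priority `k`-counter machine: source and target states, an
input word, a priority `ℓ ∈ {0, …, k}` (the transition fires only if counters
`1, …, ℓ` are all zero) and a vector added to the counters. -/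
structure PEdge (Q : Type) (k : ℕ) where
  src : Q
  word : List ℕ
  prio : ℕ
  add : Fin k → ℤ
  tgt : Q

/-- A priority `k`-counter machine. -/
structure PCM (k : ℕ) where
  Q : Type
  [fin : Fintype Q]
  edges : List (PEdge Q k)
  prioLe : ∀ e ∈ edges, e.prio ≤ k
  init : Q
  final : Q → Prop

/-- Reachability: `Reach A q μ w` iff from the initial configuration (initial
state, all counters zero) the machine can reach state `q` with counter values
`μ`, reading input `w`; counters stay nonnegative throughout, and a transition
of priority `ℓ` fires only if counters `1, …, ℓ` are zero. -/
inductive PCM.Reach {k : ℕ} (A : PCM k) : A.Q → (Fin k → ℕ) → List ℕ → Prop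
  | refl : PCM.Reach A A.init (fun _ => 0) []
  | step {q : A.Q} {μ : Fin k → ℕ} {w : List ℕ} (e : PEdge A.Q k)
      (he : e ∈ A.edges) (hsrc : e.src = q)
      (hzero : ∀ i : Fin k, (i : ℕ) < e.prio → μ i = 0)
      (μ' : Fin k → ℕ) (hupd : ∀ i : Fin k, (μ' i : ℤ) = (μ i : ℤ) + e.add i)
      (h : PCM.Reach A q μ w) :
      PCM.Reach A e.tgt μ' (w ++ e.word)

/-- The language of a priority counter machine: acceptance by final state with
all counters zero. -/
def PCM.lang {k : ℕ} (A : PCM k) : Lang :=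
  {w | ∃ q, A.final q ∧ PCM.Reach A q (fun _ => 0) w}
/-- `substWord σ u w`: `w` is obtained from `u` by replacing each letter `a` by
some word of `σ a`. -/
def substWord (σ : ℕ → Lang) (u w : List ℕ) : Prop :=
  ∃ ws : List (List ℕ), List.Forall₂ (fun a v => v ∈ σ a) u ws ∧ w = ws.flatten

/-- Application of a substitution to a language. -/
def substLang (σ : ℕ → Lang) (L : Lang) : Lang := {w | ∃ u ∈ L, substWord σ u w}

/-!
The machine for `σ(L(A))` runs `A` on its high `k` counters. When `A` fires an edge labelled
`x₁ ⋯ xₙ`, it instead runs machines for `σ(x₁), …, σ(xₙ)` one after the other on its low `ℓ`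
counters, moving on to the next one only from a final state with the low counters all zero.
Since the low counters come first, the edges of those machines keep their priorities and never
look at the counters of `A`, while an edge of priority `p` of `A` gets priority `ℓ + p`.
Conversely, every reachable configuration records a run of `A` together with a splitting of the
input read so far into images of its letters, the last one possibly still in progress.
-/

attribute [local instance] PCM.fin

theorem Fin.append_zero_zero {α : Type*} [Zero α] {m n : ℕ} :
    Fin.append (0 : Fin m → α) (0 : Fin n → α) = 0 := by
  funext i
  refine Fin.addCases (fun _ => ?_) (fun _ => ?_) i <;> simp

def CounterStep {m : ℕ} (p : ℕ) (δ : Fin m → ℤ) (μ μ' : Fin m → ℕ) : Prop :=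
  (∀ i : Fin m, (i : ℕ) < p → μ i = 0) ∧ ∀ i, (μ' i : ℤ) = μ i + δ i

theorem counterStep_append_iff {m n p : ℕ} {a : Fin m → ℤ} {b : Fin n → ℤ}
    {ρ ρ' : Fin m → ℕ} {ν ν' : Fin n → ℕ} :
    CounterStep p (Fin.append a b) (Fin.append ρ ν) (Fin.append ρ' ν') ↔
      CounterStep (min p m) a ρ ρ' ∧ CounterStep (p - m) b ν ν' := by
  have hlo : ∀ i : Fin m, (i : ℕ) < p ↔ (i : ℕ) < min p m := fun i => by omega
  have hhi : ∀ j : Fin n, m + (j : ℕ) < p ↔ (j : ℕ) < p - m := fun j => by omega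
  simp only [CounterStep, Fin.forall_fin_add, Fin.append_left, Fin.append_right,
    Fin.val_castAdd, Fin.val_natAdd, hlo, hhi]
  tauto

theorem counterStep_zero_iff {m p : ℕ} {μ μ' : Fin m → ℕ} :
    CounterStep p 0 μ μ' ↔ (∀ i : Fin m, (i : ℕ) < p → μ i = 0) ∧ μ' = μ := by
  simp [CounterStep, funext_iff]

theorem PCM.Reach.step' {m : ℕ} {M : PCM m} {e : PEdge M.Q m} {μ μ' : Fin m → ℕ} {w : List ℕ}
    (he : e ∈ M.edges) (h : M.Reach e.src μ w) (hstep : CounterStep e.prio e.add μ μ') :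
    M.Reach e.tgt μ' (w ++ e.word) :=
  .step e he rfl hstep.1 μ' hstep.2 h

def PCM.Leads {m : ℕ} (M : PCM m) (s : M.Q) (μ : Fin m → ℕ) (s' : M.Q) (μ' : Fin m → ℕ)
    (v : List ℕ) : Prop :=
  ∀ w, M.Reach s μ w → M.Reach s' μ' (w ++ v)

namespace PCM.Leads

variable {m : ℕ} {M : PCM m} {s s' s'' : M.Q} {μ μ' μ'' : Fin m → ℕ} {v v' : List ℕ}

theorem refl : M.Leads s μ s μ [] := fun w h => by rwa [List.append_nil]

theorem trans (h : M.Leads s μ s' μ' v) (h' : M.Leads s' μ' s'' μ'' v') :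
    M.Leads s μ s'' μ'' (v ++ v') := fun w hw => by
  rw [← List.append_assoc]
  exact h' _ (h w hw)

theorem of_edge {e : PEdge M.Q m} (he : e ∈ M.edges) (hstep : CounterStep e.prio e.add μ μ') :
    M.Leads e.src μ e.tgt μ' e.word := fun _ hw => hw.step' he hstep

end PCM.Leads

section SubstWord

variable {σ : ℕ → Lang} {a : ℕ} {u u' w w' : List ℕ}

@[simp]
theorem substWord_nil_left : substWord σ [] w ↔ w = [] := by
  simp [substWord]

theorem substWord_cons :
    substWord σ (a :: u) w ↔ ∃ v ∈ σ a, ∃ w', substWord σ u w' ∧ w = v ++ w' := by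
  simp only [substWord, List.forall₂_cons_left_iff]
  constructor
  · rintro ⟨_, ⟨v, ws, hv, hws, rfl⟩, rfl⟩
    exact ⟨v, hv, _, ⟨ws, hws, rfl⟩, rfl⟩
  · rintro ⟨v, hv, w', ⟨ws, hws, rfl⟩, rfl⟩
    exact ⟨v :: ws, ⟨v, ws, hv, hws, rfl⟩, rfl⟩

@[simp]
theorem substWord_singleton : substWord σ [a] w ↔ w ∈ σ a := by
  simp [substWord_cons]

theorem substWord.append (h : substWord σ u w) (h' : substWord σ u' w') :
    substWord σ (u ++ u') (w ++ w') := by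
  obtain ⟨ws, hws, rfl⟩ := h
  obtain ⟨ws', hws', rfl⟩ := h'
  exact ⟨ws ++ ws', List.rel_append hws hws', by simp⟩

theorem substWord_append_left (h : substWord σ (u ++ u') w) :
    ∃ w₁ w₂, w = w₁ ++ w₂ ∧ substWord σ u w₁ ∧ substWord σ u' w₂ := by
  obtain ⟨ws, hws, rfl⟩ := h
  refine ⟨(ws.take u.length).flatten, (ws.drop u.length).flatten, ?_,
    ⟨_, by simpa using List.forall₂_take u.length hws, rfl⟩,
    ⟨_, by simpa using List.forall₂_drop u.length hws, rfl⟩⟩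
  rw [← List.flatten_append, List.take_append_drop]

end SubstWord

namespace PCM

namespace Subst

variable {k ℓ : ℕ} (A : PCM k) (B : ℕ → PCM ℓ)

/-- In `inr ⟨j, i, p⟩` the `j`-th edge of `A` has fired, the first `i` letters of its word
have been read, and `p` is the state of the copy of `B` reading the next one. -/
def State : Type :=
  A.Q ⊕ Σ (j : Fin A.edges.length) (i : Fin A.edges[j].word.length), (B A.edges[j].word[i]).Q

instance : Fintype (State A B) := inferInstanceAs (Fintype (_ ⊕ _))

variable {A}

def entry (j : Fin A.edges.length) (i : ℕ) : State A B :=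
  if h : i < A.edges[j].word.length then .inr ⟨j, ⟨i, h⟩, (B A.edges[j].word[i]).init⟩
  else .inl A.edges[j].tgt

def fireEdge (j : Fin A.edges.length) : PEdge (State A B) (ℓ + k) where
  src := .inl A.edges[j].src
  word := []
  prio := ℓ + A.edges[j].prio
  add := Fin.append 0 A.edges[j].add
  tgt := entry B j 0

variable {B} in
def simEdge (j : Fin A.edges.length) (i : Fin A.edges[j].word.length)
    (f : PEdge (B A.edges[j].word[i]).Q ℓ) : PEdge (State A B) (ℓ + k) where
  src := .inr ⟨j, i, f.src⟩
  word := f.word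
  prio := f.prio
  add := Fin.append f.add 0
  tgt := .inr ⟨j, i, f.tgt⟩

variable {B} in
def finishEdge (j : Fin A.edges.length) (i : Fin A.edges[j].word.length)
    (q : (B A.edges[j].word[i]).Q) : PEdge (State A B) (ℓ + k) where
  src := .inr ⟨j, i, q⟩
  word := []
  prio := ℓ
  add := Fin.append 0 0
  tgt := entry B j (i + 1)

noncomputable def finalStates (M : PCM ℓ) : List M.Q :=
  open Classical in (Finset.univ.filter M.final).toList

theorem mem_finalStates {M : PCM ℓ} {q : M.Q} : q ∈ finalStates M ↔ M.final q := by
  simp [finalStates]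

variable (A)

noncomputable def edges : List (PEdge (State A B) (ℓ + k)) :=
  (List.finRange A.edges.length).flatMap fun j =>
    fireEdge B j :: (List.finRange A.edges[j].word.length).flatMap fun i =>
      (B A.edges[j].word[i]).edges.map (simEdge j i) ++ (finalStates _).map (finishEdge j i)

variable {A B}

theorem mem_edges {e : PEdge (State A B) (ℓ + k)} :
    e ∈ edges A B ↔ ∃ j, e = fireEdge B j ∨ ∃ i : Fin A.edges[j].word.length,
      (∃ f : PEdge (B A.edges[j].word[i]).Q ℓ, f ∈ (B _).edges ∧ e = simEdge j i f) ∨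
      ∃ q, (B A.edges[j].word[i]).final q ∧ e = finishEdge j i q := by
  simp [edges, mem_finalStates, eq_comm]

end Subst

open Subst in
noncomputable def subst {k ℓ : ℕ} (A : PCM k) (B : ℕ → PCM ℓ) : PCM (ℓ + k) where
  Q := State A B
  edges := Subst.edges A B
  prioLe e he := by
    obtain ⟨j, rfl | ⟨i, ⟨f, hf, rfl⟩ | ⟨q, -, rfl⟩⟩⟩ := mem_edges.1 he
    · exact Nat.add_le_add_left (A.prioLe _ (List.getElem_mem _)) ℓ
    · exact ((B _).prioLe f hf).trans (Nat.le_add_right ℓ k)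
    · exact Nat.le_add_right ℓ k
  init := .inl A.init
  final s := ∃ q, A.final q ∧ s = .inl q

end PCM

namespace PCM.Subst

variable {k ℓ : ℕ} {A : PCM k} {B : ℕ → PCM ℓ}

theorem fireEdge_mem (j : Fin A.edges.length) : fireEdge B j ∈ (A.subst B).edges :=
  mem_edges.2 ⟨j, .inl rfl⟩

theorem simEdge_mem {j : Fin A.edges.length} {i : Fin A.edges[j].word.length}
    {f : PEdge (B A.edges[j].word[i]).Q ℓ} (hf : f ∈ (B _).edges) :
    simEdge j i f ∈ (A.subst B).edges :=
  mem_edges.2 ⟨j, .inr ⟨i, .inl ⟨f, hf, rfl⟩⟩⟩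

theorem finishEdge_mem {j : Fin A.edges.length} {i : Fin A.edges[j].word.length}
    {q : (B A.edges[j].word[i]).Q} (hq : (B _).final q) :
    finishEdge j i q ∈ (A.subst B).edges :=
  mem_edges.2 ⟨j, .inr ⟨i, .inr ⟨q, hq, rfl⟩⟩⟩

theorem entry_of_lt (j : Fin A.edges.length) (i : Fin A.edges[j].word.length) :
    entry B j i = .inr ⟨j, i, (B A.edges[j].word[i]).init⟩ :=
  dif_pos i.isLt

theorem entry_of_le {j : Fin A.edges.length} {i : ℕ} (hi : A.edges[j].word.length ≤ i) :
    entry B j i = .inl A.edges[j].tgt :=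
  dif_neg (Nat.not_lt.2 hi)

theorem leads_simEdge {j : Fin A.edges.length} {i : Fin A.edges[j].word.length}
    {f : PEdge (B A.edges[j].word[i]).Q ℓ} (hf : f ∈ (B _).edges) {ρ ρ' : Fin ℓ → ℕ}
    (hstep : CounterStep f.prio f.add ρ ρ') (ν : Fin k → ℕ) :
    (A.subst B).Leads (.inr ⟨j, i, f.src⟩ : State A B) (Fin.append ρ ν)
      (.inr ⟨j, i, f.tgt⟩ : State A B) (Fin.append ρ' ν) f.word := by
  refine Leads.of_edge (M := A.subst B) (e := simEdge j i f) (simEdge_mem hf)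
    (counterStep_append_iff.2 ⟨?_, ?_⟩) <;> dsimp only [simEdge]
  · rwa [min_eq_left ((B _).prioLe f hf)]
  · simp [Nat.sub_eq_zero_of_le ((B _).prioLe f hf), counterStep_zero_iff]

theorem leads_finishEdge {j : Fin A.edges.length} {i : Fin A.edges[j].word.length}
    {q : (B A.edges[j].word[i]).Q} (hq : (B _).final q) (ν : Fin k → ℕ) :
    (A.subst B).Leads (.inr ⟨j, i, q⟩ : State A B) (Fin.append 0 ν)
      (entry B j (i + 1)) (Fin.append 0 ν) [] :=
  Leads.of_edge (M := A.subst B) (e := finishEdge j i q) (finishEdge_mem hq)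
    (counterStep_append_iff.2
      ⟨by simp [counterStep_zero_iff], by simp [finishEdge, counterStep_zero_iff]⟩)

theorem leads_fireEdge (j : Fin A.edges.length) {ν ν' : Fin k → ℕ}
    (hstep : CounterStep A.edges[j].prio A.edges[j].add ν ν') :
    (A.subst B).Leads (.inl A.edges[j].src : State A B) (Fin.append 0 ν)
      (entry B j 0) (Fin.append 0 ν') [] := by
  refine Leads.of_edge (M := A.subst B) (e := fireEdge B j) (fireEdge_mem j)
    (counterStep_append_iff.2 ⟨?_, ?_⟩)
  · simp [counterStep_zero_iff]
  · simpa [fireEdge] using hstep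

theorem leads_of_reach_letter {j : Fin A.edges.length} {i : Fin A.edges[j].word.length}
    {p : (B A.edges[j].word[i]).Q} {ρ : Fin ℓ → ℕ} {v : List ℕ}
    (h : (B A.edges[j].word[i]).Reach p ρ v) (ν : Fin k → ℕ) :
    (A.subst B).Leads (.inr ⟨j, i, (B _).init⟩ : State A B) (Fin.append 0 ν)
      (.inr ⟨j, i, p⟩ : State A B) (Fin.append ρ ν) v := by
  induction h with
  | refl => exact Leads.refl
  | step f hf hsrc hzero ρ' hupd _ ih =>
    subst hsrc
    exact ih.trans (leads_simEdge hf ⟨hzero, hupd⟩ ν)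

theorem leads_of_mem_lang {j : Fin A.edges.length} {i : Fin A.edges[j].word.length} {v : List ℕ}
    (hv : v ∈ (B A.edges[j].word[i]).lang) (ν : Fin k → ℕ) :
    (A.subst B).Leads (entry B j i) (Fin.append 0 ν) (entry B j (i + 1)) (Fin.append 0 ν) v := by
  obtain ⟨q, hq, hreach⟩ := hv
  rw [entry_of_lt, ← List.append_nil v]
  exact (leads_of_reach_letter hreach ν).trans (leads_finishEdge hq ν)

theorem leads_of_substWord_drop (j : Fin A.edges.length) (i : ℕ) {v : List ℕ}
    (hv : substWord (fun x => (B x).lang) (A.edges[j].word.drop i) v) (ν : Fin k → ℕ) :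
    (A.subst B).Leads (entry B j i) (Fin.append 0 ν) (.inl A.edges[j].tgt : State A B)
      (Fin.append 0 ν) v := by
  by_cases hi : i < A.edges[j].word.length
  · rw [List.drop_eq_getElem_cons hi, substWord_cons] at hv
    obtain ⟨v₁, hv₁, v₂, hv₂, rfl⟩ := hv
    exact (leads_of_mem_lang (i := ⟨i, hi⟩) hv₁ ν).trans (leads_of_substWord_drop j (i + 1) hv₂ ν)
  · rw [List.drop_eq_nil_of_le (by omega), substWord_nil_left] at hv
    rw [hv, entry_of_le (by omega)]
    exact Leads.refl
termination_by A.edges[j].word.length - i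
decreasing_by simp only [Fin.getElem_fin] at hi ⊢; omega

theorem reach_inl_of_reach {q : A.Q} {ν : Fin k → ℕ} {u : List ℕ} (h : A.Reach q ν u) {w : List ℕ}
    (hw : substWord (fun x => (B x).lang) u w) :
    (A.subst B).Reach (.inl q : State A B) (Fin.append 0 ν) w := by
  induction h generalizing w with
  | refl =>
    rw [substWord_nil_left] at hw
    subst hw
    have hinit : Fin.append (0 : Fin ℓ → ℕ) (fun _ : Fin k => 0) = 0 := Fin.append_zero_zero
    rw [hinit]
    exact .refl
  | step e he hsrc hzero ν' hupd _ ih =>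
    subst hsrc
    obtain ⟨j, rfl⟩ := List.get_of_mem he
    obtain ⟨w₁, w₂, rfl, hw₁, hw₂⟩ := substWord_append_left hw
    have hdrop : substWord (fun x => (B x).lang) (A.edges[j].word.drop 0) w₂ := by simpa using hw₂
    simpa using (leads_fireEdge j ⟨hzero, hupd⟩).trans (leads_of_substWord_drop j 0 hdrop ν') _
      (ih hw₁)

def Pending (B : ℕ → PCM ℓ) (j : Fin A.edges.length) (i : ℕ) (ν : Fin k → ℕ) (w : List ℕ) :
    Prop :=
  ∃ ν₀ u, A.Reach A.edges[j].src ν₀ u ∧ CounterStep A.edges[j].prio A.edges[j].add ν₀ ν ∧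
    substWord (fun x => (B x).lang) (u ++ A.edges[j].word.take i) w

def Invariant : State A B → (Fin ℓ → ℕ) → (Fin k → ℕ) → List ℕ → Prop
  | .inl q, ρ, ν, w => ρ = 0 ∧ ∃ u, A.Reach q ν u ∧ substWord (fun x => (B x).lang) u w
  | .inr ⟨j, i, p⟩, ρ, ν, w =>
    ∃ w₁ w₂, w = w₁ ++ w₂ ∧ Pending B j i ν w₁ ∧ (B A.edges[j].word[i]).Reach p ρ w₂

theorem invariant_entry {j : Fin A.edges.length} {i : ℕ} {ν : Fin k → ℕ} {w : List ℕ}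
    (h : Pending B j i ν w) : Invariant (entry B j i) 0 ν w := by
  by_cases hi : i < A.edges[j].word.length
  · rw [entry_of_lt (i := ⟨i, hi⟩)]
    exact ⟨w, [], by simp, h, .refl⟩
  · obtain ⟨ν₀, u, hreach, hstep, hw⟩ := h
    rw [List.take_of_length_le (by omega)] at hw
    rw [entry_of_le (by omega)]
    exact ⟨rfl, _, hreach.step' (List.getElem_mem _) hstep, hw⟩

theorem invariant_fireEdge {j : Fin A.edges.length} {ρ ρ' : Fin ℓ → ℕ} {ν ν' : Fin k → ℕ}
    {w : List ℕ} (h : Invariant (.inl A.edges[j].src : State A B) ρ ν w)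
    (hstep : CounterStep (fireEdge B j).prio (fireEdge B j).add
      (Fin.append ρ ν) (Fin.append ρ' ν')) :
    Invariant (entry B j 0) ρ' ν' w := by
  obtain ⟨hlo, hhi⟩ := counterStep_append_iff.1 hstep
  simp only [fireEdge, counterStep_zero_iff, min_eq_right (Nat.le_add_right ℓ _),
    Nat.add_sub_cancel_left] at hlo hhi
  obtain ⟨rfl, u, hreach, hw⟩ := h
  rw [hlo.2]
  exact invariant_entry ⟨ν, u, hreach, hhi, by simpa using hw⟩

theorem invariant_simEdge {j : Fin A.edges.length} {i : Fin A.edges[j].word.length}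
    {f : PEdge (B A.edges[j].word[i]).Q ℓ} (hf : f ∈ (B _).edges) {ρ ρ' : Fin ℓ → ℕ}
    {ν ν' : Fin k → ℕ} {w : List ℕ} (h : Invariant (.inr ⟨j, i, f.src⟩ : State A B) ρ ν w)
    (hstep : CounterStep (simEdge j i f).prio (simEdge j i f).add
      (Fin.append ρ ν) (Fin.append ρ' ν')) :
    Invariant (.inr ⟨j, i, f.tgt⟩ : State A B) ρ' ν' (w ++ f.word) := by
  have hprio : f.prio ≤ ℓ := (B _).prioLe f hf
  obtain ⟨hlo, hhi⟩ := counterStep_append_iff.1 hstep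
  simp only [simEdge, min_eq_left hprio, Nat.sub_eq_zero_of_le hprio, counterStep_zero_iff]
    at hlo hhi
  obtain ⟨w₁, w₂, rfl, hpend, hreach⟩ := h
  rw [hhi.2]
  exact ⟨w₁, w₂ ++ f.word, by simp, hpend, hreach.step' hf hlo⟩

theorem invariant_finishEdge {j : Fin A.edges.length} {i : Fin A.edges[j].word.length}
    {q : (B A.edges[j].word[i]).Q} (hq : (B _).final q) {ρ ρ' : Fin ℓ → ℕ}
    {ν ν' : Fin k → ℕ} {w : List ℕ} (h : Invariant (.inr ⟨j, i, q⟩ : State A B) ρ ν w)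
    (hstep : CounterStep (finishEdge j i q).prio (finishEdge j i q).add
      (Fin.append ρ ν) (Fin.append ρ' ν')) :
    Invariant (entry B j (i + 1)) ρ' ν' w := by
  obtain ⟨hlo, hhi⟩ := counterStep_append_iff.1 hstep
  simp only [finishEdge, min_self, Nat.sub_self, counterStep_zero_iff] at hlo hhi
  have hρ : ρ = 0 := funext fun i' => hlo.1 i' i'.isLt
  subst hρ
  obtain ⟨w₁, w₂, rfl, ⟨ν₀, u, hreach, hfire, hw₁⟩, hw₂⟩ := h
  rw [hlo.2, hhi.2]
  refine invariant_entry ⟨ν₀, u, hreach, hfire, ?_⟩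
  rw [← List.take_concat_get' _ _ i.isLt, ← List.append_assoc]
  exact hw₁.append (substWord_singleton.2 ⟨q, hq, hw₂⟩)

theorem invariant_of_reach {s : (A.subst B).Q} {μ : Fin (ℓ + k) → ℕ} {w : List ℕ}
    (h : (A.subst B).Reach s μ w) :
    Invariant s (fun i => μ (Fin.castAdd k i)) (fun i => μ (Fin.natAdd ℓ i)) w := by
  induction h with
  | refl => exact ⟨rfl, [], .refl, substWord_nil_left.2 rfl⟩
  | @step s μ w e he hsrc hzero μ' hupd _ ih =>
    have hstep : CounterStep e.prio e.add μ μ' := ⟨hzero, hupd⟩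
    rw [← Fin.append_castAdd_natAdd (f := μ), ← Fin.append_castAdd_natAdd (f := μ')] at hstep
    subst hsrc
    obtain ⟨j, rfl | ⟨i, ⟨f, hf, rfl⟩ | ⟨q, hq, rfl⟩⟩⟩ := mem_edges.1 he
    · simpa only [fireEdge, List.append_nil] using invariant_fireEdge ih hstep
    · exact invariant_simEdge hf ih hstep
    · simpa only [finishEdge, List.append_nil] using invariant_finishEdge hq ih hstep

end PCM.Subst

theorem PCM.lang_subst {k ℓ : ℕ} (A : PCM k) (B : ℕ → PCM ℓ) :
    (A.subst B).lang = substLang (fun x => (B x).lang) A.lang := by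
  ext w
  constructor
  · rintro ⟨_, ⟨q, hq, rfl⟩, hreach⟩
    obtain ⟨-, u, hu, hw⟩ := Subst.invariant_of_reach hreach
    exact ⟨u, ⟨q, hq, hu⟩, hw⟩
  · rintro ⟨u, ⟨q, hq, hu⟩, hw⟩
    have hfinal : Fin.append (0 : Fin ℓ → ℕ) (fun _ : Fin k => 0) = fun _ => 0 :=
      Fin.append_zero_zero
    exact ⟨.inl q, ⟨q, hq, rfl⟩, hfinal ▸ Subst.reach_inl_of_reach hu hw⟩

/-- The priority multicounter languages are closed under
substitution: if `A` is a priority `k`-counter machine and `σ` assigns to each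
letter a language of a priority `ℓ`-counter machine, then `σ(L(A))` is the
language of a priority `(ℓ+k)`-counter machine. -/
theorem prio_closed_under_substitution (k ℓ : ℕ) (A : PCM k)
    (σ : ℕ → Lang) (hσ : ∀ x : ℕ, ∃ B : PCM ℓ, σ x = B.lang) :
    ∃ C : PCM (ℓ + k), C.lang = substLang σ A.lang := by
  choose B hB using hσ
  obtain rfl : σ = fun x => (B x).lang := funext hB
  exact ⟨A.subst B, A.lang_subst B⟩
end
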